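/- arXiv:1011.3636 — 5 statements merged into one kernel-verified Lean document; each statement's English description precedes it below -/
import Mathlib

section
/- Let A, B be n×n Hermitian matrices and for a Hermitian matrix M let 1_{M,q} be 1 if M is nondegenerate of signature (n−q, q) and 0 otherwise. Then for every q, |1_{A,q} det A − 1_{B,q} det B| ≤ ‖A − B‖ · Σ_{i=0}^{n-1} ‖A‖^i ‖B‖^{n-1-i}. -/
/-!
When both indicators equal 1, the claim is a Lipschitz bound for the determinant: telescoping
over the columns writes `det A - det B` as a sum of `n` determinants, the `k`-th having `k` columns
of `A`, one column of `A - B` and `n - 1 - k` columns of `B`, and Hadamard's inequality bounds each.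

When the indicators differ, some eigenvalue of `A` (and likewise of `B`) has absolute value at
most `‖A - B‖`. Otherwise the span of the positive (negative) eigenvectors of `A` is a subspace on
which `B` is positive (negative) definite, and comparing dimensions forces `B` to be nondegenerate
with the same number of negative eigenvalues. Bounding the remaining eigenvalues by the operator
norm then gives `|det A| ≤ ‖A - B‖ ‖A‖ⁿ⁻¹`, a single term of the sum.
-/

open scoped Classical

/-- The Hermitian (L²) operator norm of a complex matrix. -/
noncomputable def hermOpNorm {n : ℕ} (A : Matrix (Fin n) (Fin n) ℂ) : ℝ :=
  ‖Matrix.toEuclideanCLM (𝕜 := ℂ) A‖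

/-- `1` if the Hermitian matrix is nondegenerate of signature `(n-q, q)`, i.e. has exactly `q`
negative eigenvalues, `n-q` positive ones and no zero eigenvalue; `0` otherwise. -/
noncomputable def indSig {n : ℕ} (q : ℕ) {A : Matrix (Fin n) (Fin n) ℂ}
    (hA : A.IsHermitian) : ℂ :=
  if (∀ i, hA.eigenvalues i ≠ 0) ∧
      (Finset.univ.filter (fun i => hA.eigenvalues i < 0)).card = q then 1 else 0

open Finset Matrix

theorem OrthonormalBasis.norm_det_le_prod_norm {𝕜 E ι : Type*} [RCLike 𝕜] [NormedAddCommGroup E]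
    [InnerProductSpace 𝕜 E] [Fintype ι] [LinearOrder ι] [LocallyFiniteOrderBot ι]
    [WellFoundedLT ι] (e : OrthonormalBasis ι 𝕜 E) (v : ι → E) :
    ‖e.toBasis.det v‖ ≤ ∏ i, ‖v i‖ := by
  have : FiniteDimensional 𝕜 E := e.toBasis.finiteDimensional_of_finite
  let g := InnerProductSpace.gramSchmidtOrthonormalBasis (Module.finrank_eq_card_basis e.toBasis) v
  calc ‖e.toBasis.det v‖ = ‖e.toBasis.det g‖ * ‖g.toBasis.det v‖ := by
        rw [← norm_mul, ← smul_eq_mul, ← AlternatingMap.smul_apply, ← g.coe_toBasis,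
          ← AlternatingMap.eq_smul_basis_det]
    _ = ∏ i, ‖inner 𝕜 (g i) (v i)‖ := by
        rw [OrthonormalBasis.det_to_matrix_orthonormalBasis, one_mul,
          InnerProductSpace.gramSchmidtOrthonormalBasis_det, norm_prod]
    _ ≤ ∏ i, ‖v i‖ := by
        gcongr with i
        simpa [g.orthonormal.1 i] using norm_inner_le_norm (𝕜 := 𝕜) (g i) (v i)

theorem Fin.prod_ite_lt_ite_eq {M : Type*} [CommMonoid M] {n : ℕ} (i : Fin n) (x y z : M) :
    ∏ j : Fin n, (if j < i then x else if i = j then y else z) =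
      x ^ (i : ℕ) * y * z ^ (n - 1 - i) := by
  set g : ℕ → M := fun k => if k < i then x else if (i : ℕ) = k then y else z
  have below : ∏ k ∈ range i, g k = x ^ (i : ℕ) := by
    rw [prod_congr rfl fun k hk => if_pos (mem_range.1 hk), Finset.prod_const, card_range]
  have above : ∏ k ∈ Ico ((i : ℕ) + 1) n, g k = z ^ (n - 1 - i) := by
    rw [prod_congr (g := fun _ => z) rfl fun k hk => by grind, Finset.prod_const, Nat.card_Ico,
      Nat.sub_sub, add_comm 1]
  calc ∏ j : Fin n, (if j < i then x else if i = j then y else z) = ∏ j : Fin n, g j := by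
        simp only [g, Fin.lt_def, Fin.ext_iff]
    _ = x ^ (i : ℕ) * y * z ^ (n - 1 - i) := by
        rw [Fin.prod_univ_eq_prod_range g, ← prod_range_mul_prod_Ico _ i.isLt.le,
          prod_eq_prod_Ico_succ_bot i.isLt, below, above, ← mul_assoc]
        simp [g]

theorem MultilinearMap.norm_map_sub_map_le {R E F : Type*} [Ring R] [SeminormedAddCommGroup E]
    [Module R E] [SeminormedAddCommGroup F] [Module R F] {n : ℕ}
    (f : MultilinearMap R (fun _ : Fin n => E) F) (hf : ∀ v, ‖f v‖ ≤ ∏ i, ‖v i‖)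
    {a b : Fin n → E} {α β ε : ℝ} (ha : ∀ i, ‖a i‖ ≤ α) (hb : ∀ i, ‖b i‖ ≤ β)
    (hab : ∀ i, ‖a i - b i‖ ≤ ε) :
    ‖f a - f b‖ ≤ ε * ∑ i ∈ Finset.range n, α ^ i * β ^ (n - 1 - i) := by
  have htel := f.map_sub_map_piecewise a b univ
  simp only [piecewise_univ, mem_univ, true_imp_iff] at htel
  rw [htel, ← Fin.sum_univ_eq_sum_range (fun i => α ^ i * β ^ (n - 1 - i)), mul_sum]
  refine (norm_sum_le _ _).trans (sum_le_sum fun i _ => (hf _).trans ?_)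
  calc ∏ j, ‖if j < i then a j else if i = j then a j - b j else b j‖
      ≤ ∏ j : Fin n, (if j < i then α else if i = j then ε else β) := by
        gcongr with j
        split_ifs
        exacts [ha j, hab j, hb j]
    _ = ε * (α ^ (i : ℕ) * β ^ (n - 1 - i)) := by
        rw [Fin.prod_ite_lt_ite_eq]; ring

theorem Matrix.det_eq_basisFun_det {𝕜 ι : Type*} [RCLike 𝕜] [Fintype ι] [DecidableEq ι]
    (M : Matrix ι ι 𝕜) :
    M.det = (EuclideanSpace.basisFun ι 𝕜).toBasis.det
      fun j => toEuclideanCLM (𝕜 := 𝕜) M (EuclideanSpace.single j 1) := by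
  rw [Module.Basis.det_apply]
  congr 1
  ext i j
  simp [Module.Basis.toMatrix_apply, Matrix.ofLp_toEuclideanCLM]

theorem Matrix.norm_det_sub_det_le {𝕜 : Type*} [RCLike 𝕜] {n : ℕ}
    (A B : Matrix (Fin n) (Fin n) 𝕜) :
    ‖A.det - B.det‖ ≤ ‖toEuclideanCLM (𝕜 := 𝕜) (A - B)‖ * ∑ i ∈ Finset.range n,
      ‖toEuclideanCLM (𝕜 := 𝕜) A‖ ^ i * ‖toEuclideanCLM (𝕜 := 𝕜) B‖ ^ (n - 1 - i) := by
  have hcol : ∀ (M : Matrix (Fin n) (Fin n) 𝕜) j,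
      ‖toEuclideanCLM (𝕜 := 𝕜) M (EuclideanSpace.single j 1)‖ ≤ ‖toEuclideanCLM (𝕜 := 𝕜) M‖ :=
    fun M j => (toEuclideanCLM (𝕜 := 𝕜) M).unit_le_opNorm _ (by simp)
  rw [det_eq_basisFun_det A, det_eq_basisFun_det B]
  refine MultilinearMap.norm_map_sub_map_le _
    (EuclideanSpace.basisFun (Fin n) 𝕜).norm_det_le_prod_norm (hcol A) (hcol B) fun j => ?_
  rw [← _root_.sub_apply, ← map_sub]
  exact hcol _ j

section Eigenbasis

variable {𝕜 E ι : Type*} [RCLike 𝕜] [NormedAddCommGroup E] [InnerProductSpace 𝕜 E] [Fintype ι]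

theorem OrthonormalBasis.repr_eq_zero_of_mem_span (b : OrthonormalBasis ι 𝕜 E) {s : Set ι}
    {x : E} (hx : x ∈ Submodule.span 𝕜 (b '' s)) {i : ι} (hi : i ∉ s) : b.repr x i = 0 := by
  rw [← b.coe_toBasis, b.toBasis.mem_span_image] at hx
  simpa using Finsupp.notMem_support_iff.1 fun h => hi (hx h)

theorem OrthonormalBasis.finrank_span_image (b : OrthonormalBasis ι 𝕜 E) (s : Finset ι) :
    Module.finrank 𝕜 (Submodule.span 𝕜 (b '' s)) = #s := by
  rw [Set.image_eq_range]
  exact (finrank_span_eq_card (b.orthonormal.linearIndependent.comp _ Subtype.val_injective)).trans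
    (Fintype.card_coe s)

theorem ContinuousLinearMap.abs_re_inner_apply_self_le (D : E →L[𝕜] E) (x : E) :
    |RCLike.re (inner 𝕜 x (D x))| ≤ ‖D‖ * ‖x‖ ^ 2 :=
  calc |RCLike.re (inner 𝕜 x (D x))| ≤ ‖x‖ * ‖D x‖ :=
        (RCLike.abs_re_le_norm _).trans (norm_inner_le_norm _ _)
    _ ≤ ‖x‖ * (‖D‖ * ‖x‖) := by gcongr; exact D.le_opNorm x
    _ = ‖D‖ * ‖x‖ ^ 2 := by ring

def IsEigenbasis (T : E →L[𝕜] E) (b : OrthonormalBasis ι 𝕜 E) (μ : ι → ℝ) : Prop :=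
  ∀ i, T (b i) = (μ i : 𝕜) • b i

variable {T : E →L[𝕜] E} {b : OrthonormalBasis ι 𝕜 E} {μ : ι → ℝ}

theorem IsEigenbasis.neg (h : IsEigenbasis T b μ) : IsEigenbasis (-T) b (-μ) := fun i => by
  simp [h i, neg_smul]

theorem IsEigenbasis.abs_le_norm (h : IsEigenbasis T b μ) (i : ι) : |μ i| ≤ ‖T‖ := by
  simpa [h i, norm_smul, b.orthonormal.1 i] using T.le_opNorm (b i)

theorem IsEigenbasis.repr_apply (h : IsEigenbasis T b μ) (x : E) (i : ι) :
    b.repr (T x) i = μ i * b.repr x i := by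
  conv_lhs => rw [← b.sum_repr x]
  simp [h _, Pi.single_apply, mul_comm, RCLike.real_smul_eq_coe_mul]

theorem IsEigenbasis.re_inner_apply_self (h : IsEigenbasis T b μ) (x : E) :
    RCLike.re (inner 𝕜 x (T x)) = ∑ i, μ i * ‖b.repr x i‖ ^ 2 := by
  rw [← b.repr.inner_map_map, PiLp.inner_apply, map_sum]
  refine sum_congr rfl fun i _ => ?_
  rw [h.repr_apply, RCLike.inner_apply, mul_assoc, RCLike.mul_conj]
  norm_cast

theorem IsEigenbasis.mul_norm_sq_lt_re_inner_apply_self (h : IsEigenbasis T b μ) {s : Set ι}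
    {c : ℝ} (hs : ∀ i ∈ s, c < μ i) {x : E} (hx : x ∈ Submodule.span 𝕜 (b '' s)) (hx0 : x ≠ 0) :
    c * ‖x‖ ^ 2 < RCLike.re (inner 𝕜 x (T x)) := by
  obtain ⟨i, hi⟩ : ∃ i, b.repr x i ≠ 0 := by
    by_contra! hall
    exact hx0 (b.repr.injective (by ext i; simp [hall i]))
  rw [h.re_inner_apply_self, ← b.repr.norm_map, EuclideanSpace.norm_sq_eq, mul_sum, ← sub_pos,
    ← sum_sub_distrib]
  refine sum_pos' (fun j _ => ?_) ⟨i, mem_univ i, ?_⟩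
  · by_cases hj : j ∈ s
    · nlinarith [hs j hj, sq_nonneg ‖b.repr x j‖]
    · simp [b.repr_eq_zero_of_mem_span hx hj]
  · have his : i ∈ s := by_contra fun his => hi (b.repr_eq_zero_of_mem_span hx his)
    nlinarith [hs i his, pow_pos (norm_pos_iff.2 hi) 2]

theorem IsEigenbasis.re_inner_apply_self_nonpos (h : IsEigenbasis T b μ) {s : Set ι}
    (hs : ∀ i ∈ s, μ i ≤ 0) {x : E} (hx : x ∈ Submodule.span 𝕜 (b '' s)) :
    RCLike.re (inner 𝕜 x (T x)) ≤ 0 := by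
  rw [h.re_inner_apply_self]
  refine sum_nonpos fun j _ => ?_
  by_cases hj : j ∈ s
  · exact mul_nonpos_of_nonpos_of_nonneg (hs j hj) (sq_nonneg _)
  · simp [b.repr_eq_zero_of_mem_span hx hj]

theorem IsEigenbasis.card_pos_add_card_nonpos_le {κ : Type*} [Fintype κ] {S : E →L[𝕜] E}
    {c : OrthonormalBasis κ 𝕜 E} {ν : κ → ℝ} (hT : IsEigenbasis T b μ) (hS : IsEigenbasis S c ν)
    (h : ∀ i, 0 < μ i → ‖S - T‖ < μ i) :
    #{i | 0 < μ i} + #{j | ν j ≤ 0} ≤ Module.finrank 𝕜 E := by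
  have : FiniteDimensional 𝕜 E := b.toBasis.finiteDimensional_of_finite
  have hdisj : Disjoint (Submodule.span 𝕜 (b '' ↑({i | 0 < μ i} : Finset ι)))
      (Submodule.span 𝕜 (c '' ↑({j | ν j ≤ 0} : Finset κ))) := by
    refine Submodule.disjoint_def.2 fun x hxP hxN => by_contra fun hx0 => ?_
    have hT_pos := hT.mul_norm_sq_lt_re_inner_apply_self (fun i hi => h i (by simpa using hi))
      hxP hx0
    have hS_nonpos := hS.re_inner_apply_self_nonpos (fun j hj => by simpa using hj) hxN
    have hST := abs_le.1 ((S - T).abs_re_inner_apply_self_le x)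
    have hsplit : RCLike.re (inner 𝕜 x (S x))
        = RCLike.re (inner 𝕜 x (T x)) + RCLike.re (inner 𝕜 x ((S - T) x)) := by
      simp [inner_sub_right]
    linarith
  have hdim := Submodule.finrank_add_finrank_le_of_disjoint hdisj
  rwa [b.finrank_span_image, c.finrank_span_image] at hdim

end Eigenbasis

theorem Matrix.IsHermitian.isEigenbasis {𝕜 ι : Type*} [RCLike 𝕜] [Fintype ι] [DecidableEq ι]
    {A : Matrix ι ι 𝕜} (hA : A.IsHermitian) :
    IsEigenbasis (toEuclideanCLM (𝕜 := 𝕜) A) hA.eigenvectorBasis hA.eigenvalues := fun i => by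
  ext j
  simpa [Matrix.ofLp_toEuclideanCLM] using congrFun (hA.mulVec_eigenvectorBasis i) j

theorem card_neg_eq_of_inertia_le {ι : Type*} [Fintype ι] {l m : ι → ℝ} (hl : ∀ i, l i ≠ 0)
    (hpos : #{i | 0 < l i} + #{j | m j ≤ 0} ≤ Fintype.card ι)
    (hneg : #{i | l i < 0} + #{j | 0 ≤ m j} ≤ Fintype.card ι) :
    (∀ j, m j ≠ 0) ∧ #{j | m j < 0} = #{i | l i < 0} := by
  have hl_split : #{i | 0 < l i} + #{i | l i < 0} = Fintype.card ι := by
    have h := card_filter_add_card_filter_not (s := univ) (fun i => 0 < l i)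
    rwa [filter_congr fun i _ => (not_lt.trans (hl i).le_iff_lt), card_univ] at h
  have hm_split : #{j | m j ≤ 0} + #{j | 0 < m j} = Fintype.card ι := by
    simpa [not_le] using card_filter_add_card_filter_not (s := univ) (fun j => m j ≤ 0)
  have hm_split' : #{j | 0 ≤ m j} + #{j | m j < 0} = Fintype.card ι := by
    simpa [not_le] using card_filter_add_card_filter_not (s := univ) (fun j => 0 ≤ m j)
  have hm_zero : #{j | m j ≤ 0} = #{j | m j < 0} + #{j | m j = 0} := by
    rw [← card_union_of_disjoint (disjoint_filter.2 fun j _ h => h.ne), ← filter_or]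
    simp_rw [le_iff_lt_or_eq]
  have hz : #{j | m j = 0} = 0 := by omega
  refine ⟨fun j hj => ?_, by omega⟩
  exact filter_eq_empty_iff.1 (card_eq_zero.1 hz) (mem_univ j) hj

theorem Matrix.IsHermitian.norm_det_le_of_abs_eigenvalues_le {𝕜 : Type*} [RCLike 𝕜] {n : ℕ}
    {A : Matrix (Fin n) (Fin n) 𝕜} (hA : A.IsHermitian) {i : Fin n} {ε : ℝ}
    (hi : |hA.eigenvalues i| ≤ ε) :
    ‖A.det‖ ≤ ε * ‖toEuclideanCLM (𝕜 := 𝕜) A‖ ^ (n - 1) := by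
  rw [hA.det_eq_prod_eigenvalues, norm_prod, ← mul_prod_erase univ _ (mem_univ i)]
  simp only [RCLike.norm_ofReal]
  have hrest : ∏ j ∈ univ.erase i, |hA.eigenvalues j| ≤ ‖toEuclideanCLM (𝕜 := 𝕜) A‖ ^ (n - 1) := by
    have h := prod_le_prod (s := univ.erase i) (fun j _ => abs_nonneg _)
      fun j _ => hA.isEigenbasis.abs_le_norm j
    rwa [Finset.prod_const, card_erase_of_mem (mem_univ i), card_univ, Fintype.card_fin] at h
  exact mul_le_mul hi hrest (prod_nonneg fun j _ => abs_nonneg _) ((abs_nonneg _).trans hi)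

theorem hermOpNorm_sub_comm {n : ℕ} (A B : Matrix (Fin n) (Fin n) ℂ) :
    hermOpNorm (A - B) = hermOpNorm (B - A) := by
  rw [hermOpNorm, hermOpNorm, map_sub, map_sub, norm_sub_rev]

theorem indSig_eq_zero_or_eq_one {n : ℕ} (q : ℕ) {A : Matrix (Fin n) (Fin n) ℂ}
    (hA : A.IsHermitian) : indSig q hA = 0 ∨ indSig q hA = 1 := by
  unfold indSig
  split_ifs <;> simp

theorem indSig_eq_of_forall_lt_abs_eigenvalues {n : ℕ} (q : ℕ) {A B : Matrix (Fin n) (Fin n) ℂ}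
    (hA : A.IsHermitian) (hB : B.IsHermitian)
    (h : ∀ i, hermOpNorm (A - B) < |hA.eigenvalues i|) : indSig q hB = indSig q hA := by
  have hA0 : ∀ i, hA.eigenvalues i ≠ 0 := fun i =>
    abs_pos.1 ((norm_nonneg _).trans_lt (h i))
  have hpos := hA.isEigenbasis.card_pos_add_card_nonpos_le hB.isEigenbasis fun i hi => by
    rw [norm_sub_rev, ← map_sub, ← abs_of_pos hi]
    exact h i
  -- The same count for `-A` and `-B` compares the negative eigenvalues.
  have hneg := hA.isEigenbasis.neg.card_pos_add_card_nonpos_le hB.isEigenbasis.neg fun i hi => by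
    rw [Pi.neg_apply] at hi ⊢
    rw [neg_sub_neg, ← map_sub, ← abs_of_neg (neg_pos.1 hi)]
    exact h i
  simp only [Pi.neg_apply, neg_pos, neg_nonpos, finrank_euclideanSpace_fin] at hpos hneg
  obtain ⟨hB0, hcard⟩ := card_neg_eq_of_inertia_le hA0 (by simpa using hpos) (by simpa using hneg)
  simp only [indSig, hcard, hA0, hB0, ne_eq, not_false_eq_true, implies_true, true_and]

theorem exists_abs_eigenvalues_le_of_indSig_ne {n : ℕ} {q : ℕ} {A B : Matrix (Fin n) (Fin n) ℂ}
    (hA : A.IsHermitian) (hB : B.IsHermitian) (hne : indSig q hA ≠ indSig q hB) :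
    ∃ i, |hA.eigenvalues i| ≤ hermOpNorm (A - B) := by
  by_contra! h
  exact hne (indSig_eq_of_forall_lt_abs_eigenvalues q hA hB h).symm

theorem norm_det_le_of_indSig_ne {n q : ℕ} {A B : Matrix (Fin n) (Fin n) ℂ}
    (hA : A.IsHermitian) (hB : B.IsHermitian) (hne : indSig q hA ≠ indSig q hB) :
    ‖A.det‖ ≤ hermOpNorm (A - B) *
        ∑ i ∈ Finset.range n, hermOpNorm A ^ i * hermOpNorm B ^ (n - 1 - i) ∧
      ‖B.det‖ ≤ hermOpNorm (A - B) *
        ∑ i ∈ Finset.range n, hermOpNorm A ^ i * hermOpNorm B ^ (n - 1 - i) := by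
  obtain ⟨i, hi⟩ := exists_abs_eigenvalues_le_of_indSig_ne hA hB hne
  obtain ⟨j, hj⟩ := exists_abs_eigenvalues_le_of_indSig_ne hB hA hne.symm
  have hterm : ∀ k < n, hermOpNorm (A - B) * (hermOpNorm A ^ k * hermOpNorm B ^ (n - 1 - k)) ≤
      hermOpNorm (A - B) * ∑ i ∈ Finset.range n, hermOpNorm A ^ i * hermOpNorm B ^ (n - 1 - i) :=
    fun k hk => mul_le_mul_of_nonneg_left (single_le_sum
      (f := fun i => hermOpNorm A ^ i * hermOpNorm B ^ (n - 1 - i))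
      (fun i _ => by unfold hermOpNorm; positivity) (mem_range.2 hk)) (norm_nonneg _)
  constructor
  · calc ‖A.det‖ ≤ hermOpNorm (A - B) * hermOpNorm A ^ (n - 1) :=
          hA.norm_det_le_of_abs_eigenvalues_le hi
      _ = hermOpNorm (A - B) * (hermOpNorm A ^ (n - 1) * hermOpNorm B ^ (n - 1 - (n - 1))) := by
          rw [Nat.sub_self, pow_zero, mul_one]
      _ ≤ _ := hterm (n - 1) (Nat.sub_lt i.pos one_pos)
  · calc ‖B.det‖ ≤ hermOpNorm (B - A) * hermOpNorm B ^ (n - 1) :=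
          hB.norm_det_le_of_abs_eigenvalues_le hj
      _ = hermOpNorm (A - B) * (hermOpNorm A ^ 0 * hermOpNorm B ^ (n - 1 - 0)) := by
          rw [hermOpNorm_sub_comm, pow_zero, one_mul, Nat.sub_zero]
      _ ≤ _ := hterm 0 j.pos

theorem stmt2 (n q : ℕ) (A B : Matrix (Fin n) (Fin n) ℂ)
    (hA : A.IsHermitian) (hB : B.IsHermitian) :
    ‖indSig q hA * A.det - indSig q hB * B.det‖ ≤
      hermOpNorm (A - B) *
        ∑ i ∈ Finset.range n, hermOpNorm A ^ i * hermOpNorm B ^ (n - 1 - i) := by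
  rcases indSig_eq_zero_or_eq_one q hA with hA1 | hA1 <;>
    rcases indSig_eq_zero_or_eq_one q hB with hB1 | hB1
  · rw [hA1, hB1, zero_mul, zero_mul, sub_zero, norm_zero]
    unfold hermOpNorm
    positivity
  · rw [hA1, hB1, zero_mul, one_mul, zero_sub, norm_neg]
    exact (norm_det_le_of_indSig_ne hA hB (by rw [hA1, hB1]; simp)).2
  · rw [hA1, hB1, zero_mul, one_mul, sub_zero]
    exact (norm_det_le_of_indSig_ne hA hB (by rw [hA1, hB1]; simp)).1
  · rw [hA1, hB1, one_mul, one_mul]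
    exact norm_det_sub_det_le A B
end

section
/- Let A be a Hermitian operator on ℂ^n with eigenvalues λ_1,...,λ_n and Q_A(ζ) = ⟨Aζ, ζ⟩ the associated Hermitian quadratic form. Then the integral of |Q_A(ζ)|^2 over the unit sphere S^{2n-1} with respect to the rotation-invariant probability measure μ equals (Σ λ_i^2 + (Σ λ_i)^2) / (n(n+1)). -/
/-!
Diagonalising `A = W D W*` and using the invariance of `μ` under (the conjugate of) `W` turns
`∫ |Q_A|²` into `∑ₖₗ λₖ λₗ mₖₗ`, where `mₖₗ = ∫ |ζₖ|² |ζₗ|² dμ`. By permutation invariance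
`mₖₖ = a` and `mₖₗ = b` for `k ≠ l`, so `∫ |Q_A|² = (a - b) ∑ λₖ² + b (∑ λₖ)²` for every Hermitian
`A`. For `A = c Eᵢⱼ + c̄ Eⱼᵢ` with `|c| = 1` we have `∑ λₖ = 0` and `∑ λₖ² = 2`, so this is
`2 (a - b)`. With `w = ζᵢ ζ̄ⱼ`, the forms for `c = 1` and `c = i` are `2 Re w` and `-2 Im w`, whose
squares add up to `4 |w|²`; hence `4 (a - b) = 4 b`, i.e. `a = 2 b`. Finally `(∑ₖ |ζₖ|²)² = 1` on
the sphere gives `n a + n (n - 1) b = 1`, so `b = 1 / (n (n + 1))`.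
-/

open MeasureTheory Matrix ComplexConjugate

lemma norm_add_conj_sq_add_norm_add_conj_sq (w : ℂ) :
    ‖w + conj w‖ ^ 2 + ‖Complex.I * w + conj (Complex.I * w)‖ ^ 2 = 4 * ‖w‖ ^ 2 := by
  simp only [Complex.add_conj, Complex.I_mul_re, norm_mul, Complex.norm_real, Real.norm_eq_abs,
    mul_pow, sq_abs, Complex.sq_norm, Complex.normSq_apply]
  ring

section
variable {ι : Type*} [DecidableEq ι]

lemma Equiv.Perm.exists_apply_eq_and_apply_eq {i j k l : ι} (hij : i ≠ j) (hkl : k ≠ l) :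
    ∃ σ : Equiv.Perm ι, σ i = k ∧ σ j = l := by
  set τ := Equiv.swap i k
  have hτj : τ j ≠ k := fun h => hij (τ.injective (h.trans (Equiv.swap_apply_left i k).symm)).symm
  exact ⟨τ.trans (Equiv.swap (τ j) l),
    by simp [τ, Equiv.swap_apply_of_ne_of_ne hτj.symm hkl], by simp⟩

def offDiagHermitian (c : ℂ) (i j : ι) : Matrix ι ι ℂ := single i j c + single j i (conj c)

lemma isHermitian_offDiagHermitian (c : ℂ) (i j : ι) : (offDiagHermitian c i j).IsHermitian := by
  have hsingle (a b : ι) (z : ℂ) : (single a b z)ᴴ = single b a (conj z) := by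
    ext k l
    simp only [conjTranspose_apply, single_apply]
    split_ifs <;> simp_all
  rw [IsHermitian, offDiagHermitian, conjTranspose_add, hsingle, hsingle, Complex.conj_conj,
    add_comm]

end

section
variable {ι : Type*} [Fintype ι]

lemma sum_sum_mul_mul_eq (x : ι → ℝ) {m : ι → ι → ℝ} {a b : ℝ} (hdiag : ∀ k, m k k = a)
    (hoff : ∀ k l, k ≠ l → m k l = b) :
    ∑ k, ∑ l, x k * x l * m k l = (a - b) * ∑ k, x k ^ 2 + b * (∑ k, x k) ^ 2 := by
  classical
  have hm (k l : ι) : m k l = b + if k = l then a - b else 0 := by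
    split_ifs with h
    · subst h; rw [hdiag]; ring
    · rw [hoff k l h, add_zero]
  simp only [hm, mul_add, mul_ite, mul_zero, Finset.sum_add_distrib, Finset.sum_ite_eq,
    Finset.mem_univ, if_true]
  rw [sq, Finset.sum_mul_sum, Finset.mul_sum, Finset.mul_sum, add_comm]
  congr 1 <;> refine Finset.sum_congr rfl fun k _ => ?_
  · ring
  · rw [Finset.mul_sum]
    exact Finset.sum_congr rfl fun l _ => by ring

def quadForm (A : Matrix ι ι ℂ) (ζ : ι → ℂ) : ℂ := ∑ i, ∑ j, A i j * ζ i * conj (ζ j)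

@[fun_prop]
lemma continuous_quadForm (A : Matrix ι ι ℂ) : Continuous (quadForm A) := by
  unfold quadForm; fun_prop

lemma quadForm_eq_dotProduct (A : Matrix ι ι ℂ) (ζ : ι → ℂ) :
    quadForm A ζ = ζ ⬝ᵥ (A *ᵥ star ζ) := by
  simp only [quadForm, dotProduct, mulVec, Finset.mul_sum]
  exact Finset.sum_congr rfl fun i _ => Finset.sum_congr rfl fun j _ => by
    simp only [Pi.star_apply, Complex.star_def]; ring

lemma isCompact_unitSphere : IsCompact {ζ : ι → ℂ | ∑ i, Complex.normSq (ζ i) = 1} := by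
  refine Metric.isCompact_of_isClosed_isBounded (isClosed_eq (by fun_prop) continuous_const)
    ((Metric.isBounded_closedBall (x := 0) (r := 1)).subset fun ζ hζ => ?_)
  rw [mem_closedBall_zero_iff, pi_norm_le_iff_of_nonneg zero_le_one]
  intro i
  have : Complex.normSq (ζ i) ≤ 1 :=
    hζ ▸ Finset.single_le_sum (fun k _ => Complex.normSq_nonneg (ζ k)) (Finset.mem_univ i)
  rw [Complex.normSq_eq_norm_sq] at this
  nlinarith [norm_nonneg (ζ i)]

noncomputable def fourthMoment (μ : Measure (ι → ℂ)) (k l : ι) : ℝ :=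
  ∫ ζ, Complex.normSq (ζ k) * Complex.normSq (ζ l) ∂μ

variable (μ : Measure (ι → ℂ))
  (hsupp : μ {ζ : ι → ℂ | ∑ i, Complex.normSq (ζ i) = 1}ᶜ = 0)

include hsupp in
lemma integrable_of_continuous [IsFiniteMeasure μ] {f : (ι → ℂ) → ℝ} (hf : Continuous f) :
    Integrable f μ := by
  rw [← Measure.restrict_eq_self_of_ae_mem (mem_ae_iff.mpr hsupp)]
  exact hf.continuousOn.integrableOn_compact isCompact_unitSphere

include hsupp in
lemma sum_sum_fourthMoment [IsProbabilityMeasure μ] : ∑ k, ∑ l, fourthMoment μ k l = 1 := by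
  have hint (k l : ι) : Integrable (fun ζ : ι → ℂ =>
      Complex.normSq (ζ k) * Complex.normSq (ζ l)) μ :=
    integrable_of_continuous μ hsupp (by fun_prop)
  have hsphere : ∀ᵐ ζ ∂μ, ∑ k, ∑ l, Complex.normSq (ζ k) * Complex.normSq (ζ l) = 1 := by
    filter_upwards [mem_ae_iff.mpr hsupp] with ζ (hζ : ∑ i, Complex.normSq (ζ i) = 1)
    rw [← Finset.sum_mul_sum, hζ, one_mul]
  simp only [fourthMoment]
  simp_rw [← integral_finsetSum _ fun l _ => hint _ l]
  rw [← integral_finsetSum _ fun k _ => integrable_finsetSum _ fun l _ => hint k l,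
    integral_congr_ae hsphere]
  simp

variable [DecidableEq ι]
  (hinv : ∀ U : unitaryGroup ι ℂ, μ.map (fun ζ => (U : Matrix ι ι ℂ) *ᵥ ζ) = μ)

lemma permMatrix_mem_unitaryGroup (σ : Equiv.Perm ι) : σ.permMatrix ℂ ∈ unitaryGroup ι ℂ := by
  rw [mem_unitaryGroup_iff', star_eq_conjTranspose, conjTranspose_permMatrix, ← permMatrix_mul,
    mul_inv_cancel, permMatrix_one]

lemma Matrix.IsHermitian.sum_eigenvalues {A : Matrix ι ι ℂ} (hA : A.IsHermitian) :
    ((∑ k, hA.eigenvalues k : ℝ) : ℂ) = A.trace := by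
  rw [hA.trace_eq_sum_eigenvalues]; push_cast; rfl

lemma Matrix.IsHermitian.sum_eigenvalues_sq {A : Matrix ι ι ℂ} (hA : A.IsHermitian) :
    ((∑ k, hA.eigenvalues k ^ 2 : ℝ) : ℂ) = (A * A).trace := by
  conv_rhs => rw [hA.spectral_theorem, ← map_mul, Unitary.conjStarAlgAut_apply, trace_mul_cycle,
    Unitary.coe_star_mul_self, one_mul, diagonal_mul_diagonal, trace_diagonal]
  push_cast
  simp [sq]

-- `quadForm A ζ = ζ ⬝ᵥ A *ᵥ ζ̄`, so the eigenvector unitary enters entrywise conjugated.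
lemma quadForm_map_star_eigenvectorUnitary_mulVec {A : Matrix ι ι ℂ} (hA : A.IsHermitian)
    (η : ι → ℂ) :
    quadForm A ((hA.eigenvectorUnitary : Matrix ι ι ℂ).map star *ᵥ η) =
      ((∑ k, hA.eigenvalues k * Complex.normSq (η k) : ℝ) : ℂ) := by
  set W : Matrix ι ι ℂ := (hA.eigenvectorUnitary : Matrix ι ι ℂ)
  have hdiag : star W * A * W = diagonal (RCLike.ofReal ∘ hA.eigenvalues) := by
    simpa [Unitary.conjStarAlgAut_star_apply] using hA.conjStarAlgAut_star_eigenvectorUnitary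
  have hstar : star (W.map star *ᵥ η) = W *ᵥ star η := by
    ext i; simp [mulVec, dotProduct, star_sum]
  have hvec : W.map star *ᵥ η = η ᵥ* star W := by
    rw [← vecMul_transpose]; rfl
  rw [quadForm_eq_dotProduct, hstar, mulVec_mulVec, dotProduct_mulVec, hvec, vecMul_vecMul,
    ← Matrix.mul_assoc, hdiag, dotProduct]
  push_cast
  refine Finset.sum_congr rfl fun k _ => ?_
  rw [vecMul_diagonal, Pi.star_apply, Complex.star_def, Function.comp_apply,
    Complex.normSq_eq_conj_mul_self]
  simp only [Complex.coe_algebraMap]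
  ring

lemma quadForm_offDiagHermitian (c : ℂ) (i j : ι) (ζ : ι → ℂ) :
    quadForm (offDiagHermitian c i j) ζ = c * ζ i * conj (ζ j) + conj (c * ζ i * conj (ζ j)) := by
  simp only [quadForm, offDiagHermitian, Matrix.add_apply, single_apply, ite_and, add_mul, ite_mul,
    zero_mul, Finset.sum_add_distrib, Finset.sum_ite_irrel, Finset.sum_ite_eq, Finset.mem_univ,
    if_true, Finset.sum_const_zero, map_mul, Complex.conj_conj]
  ring

lemma trace_offDiagHermitian {i j : ι} (hij : i ≠ j) (c : ℂ) :
    (offDiagHermitian c i j).trace = 0 := by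
  simp [offDiagHermitian, trace_single_eq_of_ne _ _ _ hij, trace_single_eq_of_ne _ _ _ hij.symm]

lemma trace_offDiagHermitian_mul_self {i j : ι} (hij : i ≠ j) (c : ℂ) :
    (offDiagHermitian c i j * offDiagHermitian c i j).trace = 2 * Complex.normSq c := by
  simp only [offDiagHermitian, mul_add, add_mul, ne_eq, hij, hij.symm, not_false_eq_true,
    single_mul_single_of_ne, single_mul_single_same, Complex.mul_conj,
    ← Complex.normSq_eq_conj_mul_self, zero_add, add_zero, trace_add, trace_single_eq_same]
  ring

include hinv in
lemma integral_comp_unitary_mulVec (U : unitaryGroup ι ℂ) {g : (ι → ℂ) → ℝ}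
    (hg : Continuous g) : ∫ ζ, g ((U : Matrix ι ι ℂ) *ᵥ ζ) ∂μ = ∫ ζ, g ζ ∂μ := by
  conv_rhs => rw [← hinv U]
  exact (integral_map (Continuous.aemeasurable (by fun_prop)) hg.aestronglyMeasurable).symm

include hinv in
lemma fourthMoment_perm (σ : Equiv.Perm ι) (k l : ι) :
    fourthMoment μ (σ k) (σ l) = fourthMoment μ k l := by
  have := integral_comp_unitary_mulVec μ hinv ⟨σ.permMatrix ℂ, permMatrix_mem_unitaryGroup σ⟩
    (g := fun ζ => Complex.normSq (ζ k) * Complex.normSq (ζ l)) (by fun_prop)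
  simpa [fourthMoment, permMatrix_mulVec] using this

include hinv in
lemma fourthMoment_self_eq (i k : ι) : fourthMoment μ k k = fourthMoment μ i i := by
  simpa using fourthMoment_perm μ hinv (Equiv.swap i k) i i

include hinv in
lemma fourthMoment_eq_of_ne {i j k l : ι} (hij : i ≠ j) (hkl : k ≠ l) :
    fourthMoment μ k l = fourthMoment μ i j := by
  obtain ⟨σ, rfl, rfl⟩ := Equiv.Perm.exists_apply_eq_and_apply_eq hij hkl
  exact fourthMoment_perm μ hinv σ i j

include hsupp hinv in
lemma integral_norm_quadForm_sq [IsFiniteMeasure μ] {A : Matrix ι ι ℂ} (hA : A.IsHermitian) :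
    ∫ ζ, ‖quadForm A ζ‖ ^ 2 ∂μ =
      ∑ k, ∑ l, hA.eigenvalues k * hA.eigenvalues l * fourthMoment μ k l := by
  rw [← integral_comp_unitary_mulVec μ hinv (UnitaryGroup.map_star hA.eigenvectorUnitary)
    (g := fun ζ => ‖quadForm A ζ‖ ^ 2) (by fun_prop)]
  have hexpand (η : ι → ℂ) :
      ‖quadForm A ((hA.eigenvectorUnitary : Matrix ι ι ℂ).map star *ᵥ η)‖ ^ 2 =
        ∑ k, ∑ l, hA.eigenvalues k * hA.eigenvalues l *
          (Complex.normSq (η k) * Complex.normSq (η l)) := by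
    rw [quadForm_map_star_eigenvectorUnitary_mulVec, Complex.norm_real, Real.norm_eq_abs, sq_abs,
      sq, Finset.sum_mul_sum]
    exact Finset.sum_congr rfl fun k _ => Finset.sum_congr rfl fun l _ => by ring
  have hint (k l : ι) : Integrable (fun ζ : ι → ℂ => hA.eigenvalues k * hA.eigenvalues l *
      (Complex.normSq (ζ k) * Complex.normSq (ζ l))) μ :=
    integrable_of_continuous μ hsupp (by fun_prop)
  simp only [UnitaryGroup.map_star_coe, hexpand]
  rw [integral_finsetSum _ fun k _ => integrable_finsetSum _ fun l _ => hint k l]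
  refine Finset.sum_congr rfl fun k _ => ?_
  rw [integral_finsetSum _ fun l _ => hint k l]
  simp only [integral_const_mul, fourthMoment]

include hsupp hinv in
lemma integral_norm_quadForm_offDiagHermitian_sq [IsFiniteMeasure μ] {i j : ι} (hij : i ≠ j)
    (c : ℂ) :
    ∫ ζ, ‖quadForm (offDiagHermitian c i j) ζ‖ ^ 2 ∂μ =
      2 * Complex.normSq c * (fourthMoment μ i i - fourthMoment μ i j) := by
  have hA := isHermitian_offDiagHermitian c i j
  have hsum : ∑ k, hA.eigenvalues k = 0 := by
    exact_mod_cast hA.sum_eigenvalues.trans (trace_offDiagHermitian hij c)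
  have hsq : ∑ k, hA.eigenvalues k ^ 2 = 2 * Complex.normSq c := by
    exact_mod_cast hA.sum_eigenvalues_sq.trans (trace_offDiagHermitian_mul_self hij c)
  rw [integral_norm_quadForm_sq μ hsupp hinv hA, sum_sum_mul_mul_eq _
    (fourthMoment_self_eq μ hinv i) (fun k l hkl => fourthMoment_eq_of_ne μ hinv hij hkl),
    hsum, hsq]
  ring

include hsupp hinv in
lemma fourthMoment_self_eq_two_mul [IsFiniteMeasure μ] {i j : ι} (hij : i ≠ j) :
    fourthMoment μ i i = 2 * fourthMoment μ i j := by
  have hpt (ζ : ι → ℂ) : ‖quadForm (offDiagHermitian 1 i j) ζ‖ ^ 2 +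
      ‖quadForm (offDiagHermitian Complex.I i j) ζ‖ ^ 2 =
        4 * (Complex.normSq (ζ i) * Complex.normSq (ζ j)) := by
    rw [quadForm_offDiagHermitian, quadForm_offDiagHermitian, one_mul, mul_assoc Complex.I,
      norm_add_conj_sq_add_norm_add_conj_sq, norm_mul, Complex.norm_conj,
      mul_pow, Complex.sq_norm, Complex.sq_norm]
  have key := integral_add
    (integrable_of_continuous μ hsupp (f := fun ζ => ‖quadForm (offDiagHermitian 1 i j) ζ‖ ^ 2)
      (by fun_prop))
    (integrable_of_continuous μ hsupp
      (f := fun ζ => ‖quadForm (offDiagHermitian Complex.I i j) ζ‖ ^ 2) (by fun_prop))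
  simp only [hpt, integral_const_mul] at key
  rw [integral_norm_quadForm_offDiagHermitian_sq μ hsupp hinv hij,
    integral_norm_quadForm_offDiagHermitian_sq μ hsupp hinv hij, Complex.normSq_one,
    Complex.normSq_I] at key
  change 4 * fourthMoment μ i j = _ at key
  linarith

include hsupp hinv in
lemma fourthMoment_eq [IsProbabilityMeasure μ] (k l : ι) :
    fourthMoment μ k l =
      (if k = l then 2 else 1) / (Fintype.card ι * (Fintype.card ι + 1)) := by
  set b := fourthMoment μ k k / 2
  have hdiag (p : ι) : fourthMoment μ p p = 2 * b := by
    rw [fourthMoment_self_eq μ hinv k p]; ring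
  have hoff (p q : ι) (hpq : p ≠ q) : fourthMoment μ p q = b := by
    linarith [fourthMoment_self_eq_two_mul μ hsupp hinv hpq, hdiag p]
  have hb : b * (Fintype.card ι * (Fintype.card ι + 1)) = 1 := by
    have := sum_sum_mul_mul_eq (fun _ => 1) hdiag hoff
    simp only [one_mul, one_pow, Finset.sum_const, Finset.card_univ, nsmul_eq_mul, mul_one,
      sum_sum_fourthMoment μ hsupp] at this
    linarith
  have hcard : (0 : ℝ) < Fintype.card ι * (Fintype.card ι + 1) := by
    have : (0 : ℝ) < Fintype.card ι := by exact_mod_cast Fintype.card_pos_iff.mpr ⟨k⟩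
    positivity
  split_ifs with h
  · rw [← h, hdiag, eq_div_iff hcard.ne']; linarith
  · rw [hoff k l h, eq_div_iff hcard.ne']; linarith

end

theorem stmt3_general (n : ℕ) (μ : Measure (Fin n → ℂ)) [IsProbabilityMeasure μ]
    -- μ is carried by the unit sphere S^{2n-1} ⊂ ℂ^n
    (hsupp : μ {ζ : Fin n → ℂ | ∑ i, Complex.normSq (ζ i) = 1}ᶜ = 0)
    -- μ is invariant under the unitary group U(n) (rotation invariance)
    (hinv : ∀ U : Matrix.unitaryGroup (Fin n) ℂ,
      μ.map (fun ζ => (U : Matrix (Fin n) (Fin n) ℂ).mulVec ζ) = μ)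
    (A : Matrix (Fin n) (Fin n) ℂ) (hA : A.IsHermitian) :
    ∫ ζ, ‖∑ i, ∑ j, A i j * ζ i * (starRingEnd ℂ) (ζ j)‖ ^ 2 ∂μ =
      ((∑ i, hA.eigenvalues i ^ 2) + (∑ i, hA.eigenvalues i) ^ 2) / (n * (n + 1)) := by
  have hmoment := fourthMoment_eq μ hsupp hinv
  simp only [Fintype.card_fin] at hmoment
  calc ∫ ζ, ‖quadForm A ζ‖ ^ 2 ∂μ
      = ∑ k, ∑ l, hA.eigenvalues k * hA.eigenvalues l * fourthMoment μ k l :=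
        integral_norm_quadForm_sq μ hsupp hinv hA
    _ = (2 / (n * (n + 1)) - 1 / (n * (n + 1))) * ∑ k, hA.eigenvalues k ^ 2 +
          1 / (n * (n + 1)) * (∑ k, hA.eigenvalues k) ^ 2 :=
        sum_sum_mul_mul_eq _ (fun k => by simp [hmoment])
          (fun k l hkl => by simp [hmoment, hkl])
    _ = _ := by ring

theorem stmt3 (n : ℕ) (hn : 0 < n) (μ : Measure (Fin n → ℂ)) [IsProbabilityMeasure μ]
    -- μ is carried by the unit sphere S^{2n-1} ⊂ ℂ^n
    (hsupp : μ {ζ : Fin n → ℂ | ∑ i, Complex.normSq (ζ i) = 1}ᶜ = 0)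
    -- μ is invariant under the unitary group U(n) (rotation invariance)
    (hinv : ∀ U : Matrix.unitaryGroup (Fin n) ℂ,
      μ.map (fun ζ => (U : Matrix (Fin n) (Fin n) ℂ).mulVec ζ) = μ)
    (A : Matrix (Fin n) (Fin n) ℂ) (hA : A.IsHermitian) :
    ∫ ζ, ‖∑ i, ∑ j, A i j * ζ i * (starRingEnd ℂ) (ζ j)‖ ^ 2 ∂μ =
      ((∑ i, hA.eigenvalues i ^ 2) + (∑ i, hA.eigenvalues i) ^ 2) / (n * (n + 1)) :=
  stmt3_general n μ hsupp hinv A hA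
end

section
/- Let A be a Hermitian operator on ℂ^n with operator norm ‖A‖ = max_i |λ_i|. Then (1/n²)‖A‖² ≤ ∫_{S^{2n-1}} |Q_A(ζ)|² dμ(ζ) ≤ ‖A‖², where μ is the rotation-invariant probability measure on the unit sphere and Q_A(ζ)=⟨Aζ,ζ⟩. -/
/-!
Diagonalising `A` by a unitary and using the invariance of `μ` turns the integral into
`∫ (∑ λₖ |ζₖ|²)² dμ`, a quadratic form in `λ` whose coefficients are the moments `∫ |ζₖ|² |ζₗ|² dμ`.
Since a unit vector `w` is the `i`-th row of some unitary matrix, `⟨w, ζ⟩` has the same law as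
`ζᵢ`. Averaging `|ζᵢ + ε ζⱼ|⁴` over the fourth roots of unity `ε` then gives
`∫ |ζᵢ|² |ζⱼ|² = (∫ |ζᵢ|⁴) / 2` for `i ≠ j`, and `∑ |ζₖ|² = 1` on the sphere forces
`∫ |ζᵢ|⁴ = 2 / (n (n + 1))`. So the integral is `((∑ λₖ)² + ∑ λₖ²) / (n (n + 1))`, and both
bounds follow from Cauchy–Schwarz.
-/

open MeasureTheory Matrix Complex

namespace SphereMoments

variable {n : ℕ}

def unitSphere (n : ℕ) : Set (Fin n → ℂ) := {ζ | ∑ i, normSq (ζ i) = 1}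

def IsUnitarilyInvariant (μ : Measure (Fin n → ℂ)) : Prop :=
  ∀ U : unitaryGroup (Fin n) ℂ, μ.map (fun ζ => (U : Matrix (Fin n) (Fin n) ℂ) *ᵥ ζ) = μ

theorem normSq_le_one_of_mem_unitSphere {ζ : Fin n → ℂ} (hζ : ζ ∈ unitSphere n) (i : Fin n) :
    normSq (ζ i) ≤ 1 :=
  hζ ▸ Finset.single_le_sum (fun k _ => normSq_nonneg (ζ k)) (Finset.mem_univ i)

theorem isCompact_unitSphere : IsCompact (unitSphere n) := by
  refine (isCompact_closedBall (0 : Fin n → ℂ) 1).of_isClosed_subset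
    (isClosed_eq (by fun_prop) continuous_const) fun ζ hζ => ?_
  rw [mem_closedBall_zero_iff, pi_norm_le_iff_of_nonneg zero_le_one]
  intro i
  rw [← sq_le_one_iff₀ (norm_nonneg _), Complex.sq_norm]
  exact normSq_le_one_of_mem_unitSphere hζ i

theorem norm_toLp_of_mem_unitSphere {w : Fin n → ℂ} (hw : w ∈ unitSphere n) :
    ‖WithLp.toLp 2 w‖ = 1 := by
  rw [EuclideanSpace.norm_eq]
  simp [← normSq_eq_norm_sq, hw.out]

variable {μ : Measure (Fin n → ℂ)}

theorem integrable_of_continuous [IsFiniteMeasure μ] (hμ : μ (unitSphere n)ᶜ = 0)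
    {g : (Fin n → ℂ) → ℝ} (hg : Continuous g) : Integrable g μ := by
  rw [← Measure.restrict_eq_self_of_ae_mem (ae_iff.2 hμ)]
  exact hg.continuousOn.integrableOn_compact isCompact_unitSphere

theorem integral_comp_mulVec (hμ : IsUnitarilyInvariant μ) {U : Matrix (Fin n) (Fin n) ℂ}
    (hU : U ∈ unitaryGroup (Fin n) ℂ) {g : (Fin n → ℂ) → ℝ} (hg : Continuous g) :
    ∫ ζ, g (U *ᵥ ζ) ∂μ = ∫ ζ, g ζ ∂μ := by
  conv_rhs => rw [← hμ ⟨U, hU⟩]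
  exact (integral_map (by fun_prop) hg.aestronglyMeasurable).symm

theorem exists_mem_unitaryGroup_row_eq {w : Fin n → ℂ} (hw : w ∈ unitSphere n) (i : Fin n) :
    ∃ U ∈ unitaryGroup (Fin n) ℂ, U i = star w := by
  obtain ⟨b, hb⟩ := Orthonormal.exists_orthonormalBasis_extension_of_card_eq
    (𝕜 := ℂ) (E := EuclideanSpace ℂ (Fin n)) (by simp) (v := fun _ => WithLp.toLp 2 w)
    (s := {i}) (by simp [norm_toLp_of_mem_unitSphere hw])
  refine ⟨star ((EuclideanSpace.basisFun (Fin n) ℂ).toBasis.toMatrix b),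
    Unitary.star_mem (OrthonormalBasis.toMatrix_orthonormalBasis_mem_unitary _ _), ?_⟩
  ext l
  simp [Module.Basis.toMatrix_apply, hb i rfl]

theorem integral_comp_dotProduct (hμ : IsUnitarilyInvariant μ) {w : Fin n → ℂ}
    (hw : w ∈ unitSphere n) (i : Fin n) {f : ℂ → ℝ} (hf : Continuous f) :
    ∫ ζ, f (star w ⬝ᵥ ζ) ∂μ = ∫ ζ, f (ζ i) ∂μ := by
  obtain ⟨U, hU, hUi⟩ := exists_mem_unitaryGroup_row_eq hw i
  rw [← integral_comp_mulVec hμ hU (g := fun ζ => f (ζ i)) (by fun_prop)]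
  simp only [mulVec, hUi]

theorem integral_comp_apply (hμ : IsUnitarilyInvariant μ) (i j : Fin n) {f : ℂ → ℝ}
    (hf : Continuous f) : ∫ ζ, f (ζ i) ∂μ = ∫ ζ, f (ζ j) ∂μ := by
  have hw : Pi.single i 1 ∈ unitSphere n := by simp [unitSphere, Pi.single_apply]
  simpa using integral_comp_dotProduct hμ hw j hf

theorem integral_comp_add_mul_apply (hμ : IsUnitarilyInvariant μ) {i j : Fin n} (hij : i ≠ j)
    {a b : ℂ} (hab : normSq a + normSq b = 1) (k : Fin n) {f : ℂ → ℝ} (hf : Continuous f) :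
    ∫ ζ, f (a * ζ i + b * ζ j) ∂μ = ∫ ζ, f (ζ k) ∂μ := by
  have hw : Pi.single i (starRingEnd ℂ a) + Pi.single j (starRingEnd ℂ b) ∈ unitSphere n := by
    show ∑ l, _ = 1
    rw [Fintype.sum_eq_add i j hij fun x hx => by simp [hx.1, hx.2]]
    simpa [hij, hij.symm] using hab
  simpa using integral_comp_dotProduct hμ hw k hf

theorem sum_normSq_add_mul_sq (u v : ℂ) :
    ∑ t : Fin 4, normSq (u + ![1, -1, I, -I] t * v) ^ 2 =
      4 * (normSq u ^ 2 + normSq v ^ 2) + 16 * (normSq u * normSq v) := by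
  simp only [Fin.sum_univ_four, Matrix.cons_val]
  simp [normSq_apply]
  ring

/-- Averaging over the fourth roots of unity `ε`, the fourth powers of `|ζᵢ + ε ζⱼ| / √2` sum to
`|ζᵢ|⁴ + |ζⱼ|⁴ + 4 |ζᵢ|² |ζⱼ|²`, while each of them integrates to `∫ |ζᵢ|⁴`. -/
theorem integral_normSq_mul_normSq_of_ne [IsFiniteMeasure μ] (hsupp : μ (unitSphere n)ᶜ = 0)
    (hμ : IsUnitarilyInvariant μ) {i j : Fin n} (hij : i ≠ j) :
    ∫ ζ, normSq (ζ i) * normSq (ζ j) ∂μ = (∫ ζ, normSq (ζ i) ^ 2 ∂μ) / 2 := by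
  set c : ℂ := (((√2)⁻¹ : ℝ) : ℂ)
  have hc : normSq c = 1 / 2 := by
    rw [normSq_ofReal, ← mul_inv, Real.mul_self_sqrt zero_le_two, one_div]
  have hint : ∀ g : (Fin n → ℂ) → ℝ, Continuous g → Integrable g μ :=
    fun g hg => integrable_of_continuous hsupp hg
  have hsum : ∀ ζ : Fin n → ℂ,
      ∑ t : Fin 4, normSq (c * ζ i + c * ![1, -1, I, -I] t * ζ j) ^ 2 =
        normSq (ζ i) ^ 2 + normSq (ζ j) ^ 2 + 4 * (normSq (ζ i) * normSq (ζ j)) := by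
    intro ζ
    simp only [mul_assoc, ← mul_add, normSq_mul, hc, mul_pow, ← Finset.mul_sum,
      sum_normSq_add_mul_sq]
    ring
  have hterm : ∀ t : Fin 4,
      ∫ ζ, normSq (c * ζ i + c * ![1, -1, I, -I] t * ζ j) ^ 2 ∂μ = ∫ ζ, normSq (ζ i) ^ 2 ∂μ := by
    intro t
    refine integral_comp_add_mul_apply hμ hij ?_ i (f := fun z => normSq z ^ 2) (by fun_prop)
    fin_cases t <;> simp [normSq_mul, hc] <;> norm_num
  have h := integral_congr_ae (μ := μ) (ae_of_all _ hsum)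
  rw [integral_finsetSum _ fun t _ => hint _ (by fun_prop),
    Finset.sum_congr rfl fun t _ => hterm t,
    integral_add (hint _ (by fun_prop)) (hint _ (by fun_prop)),
    integral_add (hint _ (by fun_prop)) (hint _ (by fun_prop)), integral_const_mul,
    integral_comp_apply hμ j i (f := fun z => normSq z ^ 2) (by fun_prop)] at h
  simp only [Finset.sum_const, Finset.card_univ, Fintype.card_fin, nsmul_eq_mul,
    Nat.cast_ofNat] at h
  linarith

theorem integral_normSq_mul_normSq [IsFiniteMeasure μ] (hsupp : μ (unitSphere n)ᶜ = 0)
    (hμ : IsUnitarilyInvariant μ) (i k l : Fin n) :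
    ∫ ζ, normSq (ζ k) * normSq (ζ l) ∂μ =
      (∫ ζ, normSq (ζ i) ^ 2 ∂μ) / 2 * (1 + if k = l then 1 else 0) := by
  have hmoment := integral_comp_apply hμ k i (f := fun z => normSq z ^ 2) (by fun_prop)
  rcases eq_or_ne k l with rfl | hkl
  · rw [if_pos rfl]
    simp only [← sq, hmoment]
    ring
  · rw [integral_normSq_mul_normSq_of_ne hsupp hμ hkl, hmoment, if_neg hkl, add_zero, mul_one]

theorem integral_sq_sum_mul_normSq_eq_moment_mul [IsFiniteMeasure μ]
    (hsupp : μ (unitSphere n)ᶜ = 0) (hμ : IsUnitarilyInvariant μ) (i : Fin n) (lam : Fin n → ℝ) :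
    ∫ ζ, (∑ k, lam k * normSq (ζ k)) ^ 2 ∂μ =
      (∫ ζ, normSq (ζ i) ^ 2 ∂μ) / 2 * ((∑ k, lam k) ^ 2 + ∑ k, lam k ^ 2) := by
  have hexpand : ∀ ζ : Fin n → ℂ, (∑ k, lam k * normSq (ζ k)) ^ 2 =
      ∑ k, ∑ l, lam k * lam l * (normSq (ζ k) * normSq (ζ l)) := by
    intro ζ
    rw [sq, Finset.sum_mul_sum]
    exact Finset.sum_congr rfl fun k _ => Finset.sum_congr rfl fun l _ => by ring
  have hint : ∀ k l : Fin n, Integrable (fun ζ => normSq (ζ k) * normSq (ζ l)) μ :=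
    fun k l => integrable_of_continuous hsupp (by fun_prop)
  simp_rw [hexpand]
  rw [integral_finsetSum _ fun k _ => integrable_finsetSum _ fun l _ => (hint k l).const_mul _]
  simp_rw [integral_finsetSum _ fun l _ => (hint _ l).const_mul _, integral_const_mul,
    integral_normSq_mul_normSq hsupp hμ i]
  simp only [mul_add, mul_one, mul_ite, mul_zero, Finset.sum_add_distrib, Finset.sum_ite_eq,
    Finset.mem_univ, if_true]
  rw [sq (∑ k, lam k), Finset.sum_mul_sum, Finset.mul_sum, Finset.mul_sum]
  congr 1
  · refine Finset.sum_congr rfl fun k _ => ?_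
    rw [Finset.mul_sum]
    exact Finset.sum_congr rfl fun l _ => by ring
  · exact Finset.sum_congr rfl fun k _ => by ring

theorem pos_of_measure_unitSphere_compl [IsProbabilityMeasure μ]
    (hsupp : μ (unitSphere n)ᶜ = 0) : 0 < n := by
  obtain ⟨ζ, hζ⟩ := (ae_iff.2 hsupp : ∀ᵐ ζ ∂μ, ζ ∈ unitSphere n).exists
  rcases n with _ | n
  · simp [unitSphere] at hζ
  · exact n.succ_pos

theorem integral_normSq_sq [IsProbabilityMeasure μ] (hsupp : μ (unitSphere n)ᶜ = 0)
    (hμ : IsUnitarilyInvariant μ) (i : Fin n) :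
    ∫ ζ, normSq (ζ i) ^ 2 ∂μ = 2 / (n * (n + 1)) := by
  -- the weights `λ = 1` turn the integrand into `(∑ |ζₖ|²)² = 1`
  have h := integral_sq_sum_mul_normSq_eq_moment_mul hsupp hμ i 1
  have hone : ∫ ζ, (∑ k, normSq (ζ k)) ^ 2 ∂μ = 1 := by
    rw [integral_congr_ae (g := fun _ => 1)
      ((ae_iff.2 hsupp : ∀ᵐ ζ ∂μ, ζ ∈ unitSphere n).mono fun ζ hζ => ?_)]
    · simp
    · rw [show ∑ k, normSq (ζ k) = 1 from hζ, one_pow]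
  simp only [Pi.one_apply, Finset.sum_const, Finset.card_univ, Fintype.card_fin, nsmul_eq_mul,
    mul_one, one_mul, one_pow, hone] at h
  have hn : (0 : ℝ) < n := Nat.cast_pos.2 (Fin.pos i)
  rw [eq_div_iff (by positivity)]
  linear_combination -2 * h

theorem integral_sq_sum_mul_normSq [IsProbabilityMeasure μ] (hsupp : μ (unitSphere n)ᶜ = 0)
    (hμ : IsUnitarilyInvariant μ) (lam : Fin n → ℝ) :
    ∫ ζ, (∑ k, lam k * normSq (ζ k)) ^ 2 ∂μ =
      ((∑ k, lam k) ^ 2 + ∑ k, lam k ^ 2) / (n * (n + 1)) := by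
  let i : Fin n := ⟨0, pos_of_measure_unitSphere_compl hsupp⟩
  rw [integral_sq_sum_mul_normSq_eq_moment_mul hsupp hμ i, integral_normSq_sq hsupp hμ i]
  ring

theorem _root_.Matrix.IsHermitian.sum_mul_mul_conj_eq {A : Matrix (Fin n) (Fin n) ℂ}
    (hA : A.IsHermitian) (ζ : Fin n → ℂ) :
    ∑ i, ∑ j, A i j * ζ i * starRingEnd ℂ (ζ j) =
      ((∑ k, hA.eigenvalues k *
        normSq (((hA.eigenvectorUnitary : Matrix (Fin n) (Fin n) ℂ)ᵀ *ᵥ ζ) k) : ℝ) : ℂ) := by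
  set V : Matrix (Fin n) (Fin n) ℂ := ↑hA.eigenvectorUnitary
  have hA_apply : ∀ i j, A i j = ∑ k, V i k * hA.eigenvalues k * starRingEnd ℂ (V j k) := by
    intro i j
    conv_lhs => rw [hA.spectral_theorem]
    simp [V, Matrix.mul_apply, Matrix.diagonal_apply]
  push_cast
  simp_rw [← mul_conj, hA_apply, mulVec, dotProduct, transpose_apply, map_sum, map_mul,
    Finset.sum_mul, Finset.mul_sum]
  conv_rhs => rw [Finset.sum_comm]; enter [2, i]; rw [Finset.sum_comm]
  exact Finset.sum_congr rfl fun i _ => Finset.sum_congr rfl fun j _ =>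
    Finset.sum_congr rfl fun k _ => by ring

theorem integral_norm_sum_mul_mul_conj_sq [IsProbabilityMeasure μ]
    (hsupp : μ (unitSphere n)ᶜ = 0) (hμ : IsUnitarilyInvariant μ)
    {A : Matrix (Fin n) (Fin n) ℂ} (hA : A.IsHermitian) :
    ∫ ζ, ‖∑ i, ∑ j, A i j * ζ i * starRingEnd ℂ (ζ j)‖ ^ 2 ∂μ =
      ((∑ k, hA.eigenvalues k) ^ 2 + ∑ k, hA.eigenvalues k ^ 2) / (n * (n + 1)) := by
  have hU : (hA.eigenvectorUnitary : Matrix (Fin n) (Fin n) ℂ)ᵀ ∈ unitaryGroup (Fin n) ℂ :=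
    transpose_mem_unitaryGroup_iff.2 hA.eigenvectorUnitary.2
  simp_rw [hA.sum_mul_mul_conj_eq, norm_real, Real.norm_eq_abs, sq_abs]
  rw [integral_comp_mulVec hμ hU (g := fun ζ => (∑ k, hA.eigenvalues k * normSq (ζ k)) ^ 2)
    (by fun_prop), integral_sq_sum_mul_normSq hsupp hμ]

/-- Cauchy–Schwarz for the `n` terms of `λₖ = ∑ᵢ λᵢ - ∑_{i ≠ k} λᵢ`. -/
theorem sq_le_sq_sum_add_sum_sq (lam : Fin n → ℝ) (k : Fin n) :
    (n + 1) * lam k ^ 2 ≤ n * ((∑ i, lam i) ^ 2 + ∑ i, lam i ^ 2) := by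
  set g := Function.update (fun i => -lam i) k (∑ i, lam i)
  have hsplit : ∀ f : Fin n → ℝ, ∑ i, f i = f k + ∑ i ∈ Finset.univ.erase k, f i :=
    fun f => (Finset.add_sum_erase _ _ (Finset.mem_univ k)).symm
  have hg : ∀ i ∈ Finset.univ.erase k, g i = -lam i :=
    fun i hi => Function.update_of_ne (Finset.ne_of_mem_erase hi) _ _
  have hgk : g k = ∑ i, lam i := Function.update_self _ _ _
  have hsum : ∑ i, g i = lam k := by
    rw [hsplit g, Finset.sum_congr rfl hg, Finset.sum_neg_distrib, hgk, hsplit lam]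
    ring
  have hsum_sq : ∑ i, g i ^ 2 = (∑ i, lam i) ^ 2 + ∑ i ∈ Finset.univ.erase k, lam i ^ 2 := by
    rw [hsplit (g · ^ 2), Finset.sum_congr rfl fun i hi => by rw [hg i hi, neg_sq], hgk]
  have hcs := sq_sum_le_card_mul_sum_sq (s := Finset.univ) (f := g)
  rw [hsum, hsum_sq, Finset.card_univ, Fintype.card_fin] at hcs
  rw [hsplit (lam · ^ 2)]
  linarith

theorem one_div_sq_mul_sq_le (lam : Fin n → ℝ) (k : Fin n) :
    1 / (n : ℝ) ^ 2 * |lam k| ^ 2 ≤ ((∑ i, lam i) ^ 2 + ∑ i, lam i ^ 2) / (n * (n + 1)) := by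
  have hn : (0 : ℝ) < n := Nat.cast_pos.2 (Fin.pos k)
  rw [sq_abs, one_div_mul_eq_div, div_le_div_iff₀ (by positivity) (by positivity)]
  nlinarith [sq_le_sq_sum_add_sum_sq lam k]

theorem div_le_sq_of_abs_le (lam : Fin n → ℝ) {M : ℝ} (hM : ∀ i, |lam i| ≤ M) :
    ((∑ i, lam i) ^ 2 + ∑ i, lam i ^ 2) / (n * (n + 1)) ≤ M ^ 2 := by
  have hsq : ∑ i, lam i ^ 2 ≤ n * M ^ 2 := by
    simpa using Finset.sum_le_sum fun i (_ : i ∈ Finset.univ) =>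
      sq_le_sq' (abs_le.1 (hM i)).1 (abs_le.1 (hM i)).2
  have hcs := sq_sum_le_card_mul_sum_sq (s := Finset.univ) (f := lam)
  rw [Finset.card_univ, Fintype.card_fin] at hcs
  refine div_le_of_le_mul₀ (by positivity) (sq_nonneg M) ?_
  nlinarith

end SphereMoments

theorem stmt4_general (n : ℕ) (μ : Measure (Fin n → ℂ)) [IsProbabilityMeasure μ]
    -- μ is carried by the unit sphere S^{2n-1} ⊂ ℂ^n
    (hsupp : μ {ζ : Fin n → ℂ | ∑ i, Complex.normSq (ζ i) = 1}ᶜ = 0)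
    -- μ is invariant under the unitary group U(n) (rotation invariance)
    (hinv : ∀ U : Matrix.unitaryGroup (Fin n) ℂ,
      μ.map (fun ζ => (U : Matrix (Fin n) (Fin n) ℂ).mulVec ζ) = μ)
    (A : Matrix (Fin n) (Fin n) ℂ) (hA : A.IsHermitian) :
    (1 / (n : ℝ) ^ 2) * (⨆ i, |hA.eigenvalues i|) ^ 2 ≤
        ∫ ζ, (‖∑ i, ∑ j, A i j * ζ i * (starRingEnd ℂ) (ζ j)‖) ^ 2 ∂μ ∧
      ∫ ζ, (‖∑ i, ∑ j, A i j * ζ i * (starRingEnd ℂ) (ζ j)‖) ^ 2 ∂μ ≤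
        (⨆ i, |hA.eigenvalues i|) ^ 2 := by
  have : Nonempty (Fin n) := ⟨⟨0, SphereMoments.pos_of_measure_unitSphere_compl hsupp⟩⟩
  obtain ⟨k, hk⟩ := exists_eq_ciSup_of_finite (f := fun i => |hA.eigenvalues i|)
  have hle : ∀ i, |hA.eigenvalues i| ≤ |hA.eigenvalues k| := fun i =>
    hk ▸ le_ciSup (f := fun i => |hA.eigenvalues i|) (Set.finite_range _).bddAbove i
  rw [SphereMoments.integral_norm_sum_mul_mul_conj_sq hsupp hinv hA, ← hk]
  exact ⟨SphereMoments.one_div_sq_mul_sq_le _ k, SphereMoments.div_le_sq_of_abs_le _ hle⟩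

theorem stmt4 (n : ℕ) (hn : 0 < n) (μ : Measure (Fin n → ℂ)) [IsProbabilityMeasure μ]
    -- μ is carried by the unit sphere S^{2n-1} ⊂ ℂ^n
    (hsupp : μ {ζ : Fin n → ℂ | ∑ i, Complex.normSq (ζ i) = 1}ᶜ = 0)
    -- μ is invariant under the unitary group U(n) (rotation invariance)
    (hinv : ∀ U : Matrix.unitaryGroup (Fin n) ℂ,
      μ.map (fun ζ => (U : Matrix (Fin n) (Fin n) ℂ).mulVec ζ) = μ)
    (A : Matrix (Fin n) (Fin n) ℂ) (hA : A.IsHermitian) :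
    (1 / (n : ℝ) ^ 2) * (⨆ i, |hA.eigenvalues i|) ^ 2 ≤
        ∫ ζ, (‖∑ i, ∑ j, A i j * ζ i * (starRingEnd ℂ) (ζ j)‖) ^ 2 ∂μ ∧
      ∫ ζ, (‖∑ i, ∑ j, A i j * ζ i * (starRingEnd ℂ) (ζ j)‖) ^ 2 ∂μ ≤
        (⨆ i, |hA.eigenvalues i|) ^ 2 :=
  stmt4_general n μ hsupp hinv A hA
end

section
/- For positive integers k, r, n, the quantity I_{k,r,n} = ∫_{Δ_{k-1}} (Σ_{s=1}^k x_s/s)^n dν_{k,r}(x) satisfies the lower bound I_{k,r,n} ≥ r^n (1 + 1/2 + ... + 1/k)^n / (kr(kr+1)···(kr+n−1)). -/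
open MeasureTheory

/-- Integral over the standard (k-1)-simplex `{x ∈ ℝ^k : x_s ≥ 0, Σ x_s = 1}`, parametrized by
the first `k-1` coordinates with `x_k = 1 - Σ_{i<k-1} x_i`, Lebesgue integral in dimension `k-1`. -/
noncomputable def simplexIntegral (k : ℕ) (f : (Fin k → ℝ) → ℝ) : ℝ :=
  ∫ y in {y : Fin (k - 1) → ℝ | (∀ i, 0 ≤ y i) ∧ ∑ i, y i ≤ 1},
    f (fun s => if h : (s : ℕ) < k - 1 then y ⟨s, h⟩ else 1 - ∑ i, y i)

/-- Integral against the probability measure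
`dν_{k,r}(x) = (kr−1)! (x_1⋯x_k)^{r−1}/((r−1)!)^k dx` on the simplex. -/
noncomputable def nuIntegral (k r : ℕ) (f : (Fin k → ℝ) → ℝ) : ℝ :=
  simplexIntegral k (fun x =>
    f x * ((Nat.factorial (k * r - 1) : ℝ) / (Nat.factorial (r - 1) : ℝ) ^ k *
      ∏ s, x s ^ (r - 1)))

/-!
Each coordinate of `x ∼ ν_{k,r}` has mean `1 / k`. Indeed, in the chart `x = (y, 1 - ∑ y)` the
moments of `ν_{k,r}` are Dirichlet integrals
`∫ ∏ y_i ^ a_i (1 - ∑ y) ^ c dy = ∏ a_i! c! / (m + c + ∑ a_i)!` over the solid simplex in `ℝ^m`,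
which follow from the beta integral by Fubini. Hence `∑ x_s / s` has mean `H_k / k`, and Jensen's
inequality for `t ↦ t ^ n` gives `I_{k,r,n} ≥ (H_k / k) ^ n = r ^ n H_k ^ n / (kr) ^ n`; this is at
least the claimed bound because every factor `kr + i` is at least `kr`.
-/

open Set Finset
open scoped Nat

lemma pow_add_mul_pow_pred_mul_sub_le_pow {a b : ℝ} (ha : 0 ≤ a) (hb : 0 ≤ b) (n : ℕ) :
    a ^ n + n * a ^ (n - 1) * (b - a) ≤ b ^ n := by
  have hterm : ∀ i ∈ range n, a ^ (n - 1) * (b - a) ≤ b ^ i * a ^ (n - 1 - i) * (b - a) := by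
    intro i hi
    have hsplit : a ^ (n - 1) = a ^ i * a ^ (n - 1 - i) := by
      rw [← pow_add, Nat.add_sub_cancel' (Nat.le_sub_one_of_lt (mem_range.1 hi))]
    have hsign : 0 ≤ (b ^ i - a ^ i) * (b - a) := by
      rcases le_total a b with h | h
      · exact mul_nonneg (sub_nonneg.2 (pow_le_pow_left₀ ha h i)) (sub_nonneg.2 h)
      · exact mul_nonneg_of_nonpos_of_nonpos (sub_nonpos.2 (pow_le_pow_left₀ hb h i))
          (sub_nonpos.2 h)
    rw [hsplit]
    nlinarith [mul_nonneg (pow_nonneg ha (n - 1 - i)) hsign]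
  have := sum_le_sum hterm
  rw [sum_const, card_range, nsmul_eq_mul, ← sum_mul, geom_sum₂_mul] at this
  linarith

/-- Jensen for `t ↦ t ^ n` against the density `w`: integrate the tangent line at the mean. -/
theorem pow_integral_mul_le_integral_pow_mul {α : Type*} [MeasurableSpace α] {μ : Measure α}
    {w f : α → ℝ} (n : ℕ) (hw : 0 ≤ᵐ[μ] w) (hf : 0 ≤ᵐ[μ] f) (hw1 : ∫ x, w x ∂μ = 1)
    (hwi : Integrable w μ) (hfwi : Integrable (fun x => f x * w x) μ)
    (hfnwi : Integrable (fun x => f x ^ n * w x) μ) :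
    (∫ x, f x * w x ∂μ) ^ n ≤ ∫ x, f x ^ n * w x ∂μ := by
  set A := ∫ x, f x * w x ∂μ
  have hA : 0 ≤ A := integral_nonneg_of_ae <| by
    filter_upwards [hw, hf] with x hwx hfx using mul_nonneg hfx hwx
  have hcentered : Integrable (fun x => f x * w x - A * w x) μ := hfwi.sub (hwi.const_mul A)
  calc A ^ n = ∫ x, (A ^ n * w x + n * A ^ (n - 1) * (f x * w x - A * w x)) ∂μ := by
        rw [integral_add (hwi.const_mul _) (hcentered.const_mul _), integral_const_mul,
          integral_const_mul, integral_sub hfwi (hwi.const_mul _), integral_const_mul, hw1]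
        ring
    _ ≤ ∫ x, f x ^ n * w x ∂μ := by
        refine integral_mono_ae ((hwi.const_mul _).add (hcentered.const_mul _)) hfnwi ?_
        filter_upwards [hw, hf] with x hwx hfx
        linear_combination
          mul_le_mul_of_nonneg_right (pow_add_mul_pow_pred_mul_sub_le_pow hA hfx n) hwx

lemma pow_le_prod_range_add {x : ℝ} (hx : 0 ≤ x) (n : ℕ) : x ^ n ≤ ∏ i ∈ range n, (x + i) :=
  calc x ^ n = ∏ _i ∈ range n, x := by rw [prod_const, card_range]
    _ ≤ ∏ i ∈ range n, (x + i) :=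
      prod_le_prod (fun _ _ => hx) fun i _ => le_add_of_nonneg_right (Nat.cast_nonneg i)

lemma integral_pow_succ_mul_sub_pow (a c : ℕ) (b : ℝ) :
    ∫ t in (0 : ℝ)..b, t ^ (a + 1) * (b - t) ^ c
      = (a + 1) / (c + 1) * ∫ t in (0 : ℝ)..b, t ^ a * (b - t) ^ (c + 1) := by
  have hu : ∀ t ∈ uIcc (0 : ℝ) b, HasDerivAt (fun t : ℝ => t ^ (a + 1)) ((a + 1) * t ^ a) t :=
    fun t _ => by simpa using hasDerivAt_pow (a + 1) t
  have hv : ∀ t ∈ uIcc (0 : ℝ) b,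
      HasDerivAt (fun t : ℝ => -(b - t) ^ (c + 1) / (c + 1)) ((b - t) ^ c) t := by
    intro t _
    refine ((((hasDerivAt_id t).const_sub b).pow (c + 1)).neg.div_const ((c : ℝ) + 1)).congr_deriv
      ?_
    simp only [id, add_tsub_cancel_right]
    push_cast
    field_simp
  rw [intervalIntegral.integral_mul_deriv_eq_deriv_mul hu hv
    ((continuous_const.mul (continuous_pow a)).intervalIntegrable _ _)
    (((continuous_const.sub continuous_id).pow c).intervalIntegrable _ _),
    ← intervalIntegral.integral_const_mul]
  simp only [sub_self, zero_pow (Nat.succ_ne_zero _), neg_zero, zero_div, mul_zero, zero_mul,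
    sub_zero, zero_sub, ← intervalIntegral.integral_neg]
  congr 1
  funext t
  ring

lemma integral_pow_mul_sub_pow (a c : ℕ) (b : ℝ) :
    ∫ t in (0 : ℝ)..b, t ^ a * (b - t) ^ c = b ^ (a + c + 1) * (a ! * c ! / (a + c + 1)! : ℝ) := by
  induction a generalizing c with
  | zero =>
    have := intervalIntegral.integral_comp_sub_left (fun t : ℝ => t ^ c) (a := 0) (b := b) b
    simp only [sub_self, sub_zero] at this
    simp only [pow_zero, one_mul, zero_add]
    rw [this, integral_pow, Nat.factorial_succ c]
    push_cast
    field_simp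
    simp
  | succ a ih =>
    rw [integral_pow_succ_mul_sub_pow, ih, show a + (c + 1) + 1 = a + 1 + c + 1 by omega,
      Nat.factorial_succ a, Nat.factorial_succ c]
    push_cast
    field_simp

def solidSimplex (m : ℕ) : Set (Fin m → ℝ) := {y | (∀ i, 0 ≤ y i) ∧ ∑ i, y i ≤ 1}

lemma isCompact_solidSimplex (m : ℕ) : IsCompact (solidSimplex m) := by
  have hclosed : IsClosed (solidSimplex m) := by
    simp only [solidSimplex, ofPred_and, ofPred_forall]
    exact (isClosed_iInter fun i => isClosed_le continuous_const (continuous_apply i)).inter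
      (isClosed_le (by fun_prop) continuous_const)
  refine (isCompact_Icc (a := 0) (b := 1)).of_isClosed_subset hclosed fun y hy =>
    ⟨hy.1, fun i => ?_⟩
  exact (single_le_sum (fun j _ => hy.1 j) (mem_univ i)).trans hy.2

lemma measurableSet_solidSimplex (m : ℕ) : MeasurableSet (solidSimplex m) :=
  (isCompact_solidSimplex m).isClosed.measurableSet

lemma integrableOn_solidSimplex {m : ℕ} {g : (Fin m → ℝ) → ℝ} (hg : Continuous g) :
    IntegrableOn g (solidSimplex m) :=
  hg.continuousOn.integrableOn_compact (isCompact_solidSimplex m)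

lemma Fin.cons_mem_solidSimplex_iff {m : ℕ} {t : ℝ} {y : Fin m → ℝ} :
    (Fin.cons t y : Fin (m + 1) → ℝ) ∈ solidSimplex (m + 1) ↔
      y ∈ solidSimplex m ∧ t ∈ Icc 0 (1 - ∑ i, y i) := by
  simp only [solidSimplex, mem_ofPred_eq, Fin.forall_fin_succ, Fin.sum_univ_succ, Fin.cons_zero,
    Fin.cons_succ, Set.mem_Icc]
  constructor
  · rintro ⟨⟨ht, hy⟩, hsum⟩
    exact ⟨⟨hy, by linarith⟩, ht, by linarith⟩
  · rintro ⟨⟨hy, -⟩, ht, hsum⟩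
    exact ⟨⟨ht, hy⟩, by linarith⟩

lemma setIntegral_solidSimplex_succ {m : ℕ} {g : (Fin (m + 1) → ℝ) → ℝ} (hg : Continuous g) :
    ∫ y in solidSimplex (m + 1), g y
      = ∫ y in solidSimplex m, ∫ t in (0 : ℝ)..(1 - ∑ i, y i), g (Fin.cons t y) := by
  classical
  have hcons := (volume_preserving_piFinSuccAbove (fun _ : Fin (m + 1) => ℝ) 0).symm
  have hint : Integrable ((solidSimplex (m + 1)).indicator g) :=
    (integrable_indicator_iff (measurableSet_solidSimplex _)).2 (integrableOn_solidSimplex hg)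
  rw [← integral_indicator (measurableSet_solidSimplex _), ← hcons.integral_comp',
    Measure.volume_eq_prod, integral_prod_symm (fun p => (solidSimplex (m + 1)).indicator g
      ((MeasurableEquiv.piFinSuccAbove (fun _ => ℝ) 0).symm p))
      ((hcons.integrable_comp_emb (MeasurableEquiv.measurableEmbedding _)).2 hint),
    ← integral_indicator (measurableSet_solidSimplex _)]
  congr 1
  funext y
  have hsymm : ∀ p : ℝ × (Fin m → ℝ),
      (MeasurableEquiv.piFinSuccAbove (fun _ => ℝ) 0).symm p = Fin.cons p.1 p.2 := fun p => by
    rw [MeasurableEquiv.piFinSuccAbove_symm_apply]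
    exact Fin.insertNth_zero' _ _
  simp only [hsymm]
  by_cases hy : y ∈ solidSimplex m
  · have hb : 0 ≤ 1 - ∑ i, y i := sub_nonneg.2 hy.2
    rw [indicator_of_mem hy, intervalIntegral.integral_of_le hb, ← integral_Icc_eq_integral_Ioc,
      ← integral_indicator measurableSet_Icc]
    congr 1
    funext t
    simp only [Set.indicator_apply, Fin.cons_mem_solidSimplex_iff, hy, true_and]
  · rw [indicator_of_notMem hy]
    simp [Fin.cons_mem_solidSimplex_iff, hy]

theorem integral_solidSimplex_prod_pow_mul_pow (m : ℕ) (a : Fin m → ℕ) (c : ℕ) :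
    ∫ y in solidSimplex m, (∏ i, y i ^ a i) * (1 - ∑ i, y i) ^ c
      = (∏ i, ((a i)! : ℝ)) * c ! / (m + c + ∑ i, a i)! := by
  induction m generalizing c with
  | zero =>
    have : solidSimplex 0 = univ := by ext y; simp [solidSimplex]
    simp [this, measureReal_def, volume_pi, Measure.pi_empty_univ, c.factorial_ne_zero]
  | succ m ih =>
    have hinner : ∀ y : Fin m → ℝ,
        ∫ t in (0 : ℝ)..(1 - ∑ i, y i),
          (∏ i, (Fin.cons t y : Fin (m + 1) → ℝ) i ^ a i) *
            (1 - ∑ i, (Fin.cons t y : Fin (m + 1) → ℝ) i) ^ c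
        = ((a 0)! * c ! / (a 0 + c + 1)! : ℝ) *
            ((∏ i, y i ^ a i.succ) * (1 - ∑ i, y i) ^ (a 0 + c + 1)) := by
      intro y
      simp only [Fin.prod_univ_succ, Fin.sum_univ_succ, Fin.cons_zero, Fin.cons_succ,
        sub_add_eq_sub_sub_swap, mul_right_comm _ (∏ i, y i ^ a i.succ),
        intervalIntegral.integral_mul_const, integral_pow_mul_sub_pow]
      ring
    rw [setIntegral_solidSimplex_succ (by fun_prop)]
    simp only [hinner]
    rw [integral_const_mul, ih, Fin.prod_univ_succ, Fin.sum_univ_succ,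
      show m + (a 0 + c + 1) + ∑ i : Fin m, a i.succ = m + 1 + c + (a 0 + ∑ i : Fin m, a i.succ) by
        omega]
    field_simp

def simplexChart (k : ℕ) (y : Fin (k - 1) → ℝ) : Fin k → ℝ :=
  fun s => if h : (s : ℕ) < k - 1 then y ⟨s, h⟩ else 1 - ∑ i, y i

lemma simplexIntegral_succ (m : ℕ) (f : (Fin (m + 1) → ℝ) → ℝ) :
    simplexIntegral (m + 1) f = ∫ y in solidSimplex m, f (simplexChart (m + 1) y) := rfl

lemma continuous_simplexChart (k : ℕ) : Continuous (simplexChart k) :=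
  continuous_pi fun s => by unfold simplexChart; split_ifs <;> fun_prop

lemma simplexChart_mem_stdSimplex {m : ℕ} {y : Fin m → ℝ} (hy : y ∈ solidSimplex m) :
    simplexChart (m + 1) y ∈ stdSimplex ℝ (Fin (m + 1)) := by
  refine ⟨fun s => ?_, by simp [Fin.sum_univ_castSucc, simplexChart]⟩
  unfold simplexChart
  split_ifs
  exacts [hy.1 _, sub_nonneg.2 hy.2]

lemma prod_simplexChart_pow {m : ℕ} (y : Fin m → ℝ) (e : Fin (m + 1) → ℕ) :
    ∏ s, simplexChart (m + 1) y s ^ e s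
      = (∏ i, y i ^ e i.castSucc) * (1 - ∑ i, y i) ^ e (Fin.last m) := by
  simp [Fin.prod_univ_castSucc, simplexChart]

theorem integral_solidSimplex_prod_simplexChart_pow (m : ℕ) (e : Fin (m + 1) → ℕ) :
    ∫ y in solidSimplex m, ∏ s, simplexChart (m + 1) y s ^ e s
      = (∏ s, ((e s)! : ℝ)) / (m + ∑ s, e s)! := by
  simp only [prod_simplexChart_pow]
  rw [integral_solidSimplex_prod_pow_mul_pow, Fin.prod_univ_castSucc, Fin.sum_univ_castSucc,
    add_right_comm, add_assoc m]

lemma nuIntegral_prod_pow {m r : ℕ} (hr : 0 < r) (e : Fin (m + 1) → ℕ) :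
    nuIntegral (m + 1) r (fun x => ∏ s, x s ^ e s)
      = ((m + 1) * r - 1)! / ((r - 1)! : ℝ) ^ (m + 1) * (∏ s, ((r - 1 + e s)! : ℝ))
          / ((m + 1) * r - 1 + ∑ s, e s)! := by
  have hdeg : m + ∑ s : Fin (m + 1), (r - 1 + e s) = (m + 1) * r - 1 + ∑ s, e s := by
    obtain ⟨r, rfl⟩ := Nat.exists_eq_add_one_of_ne_zero hr.ne'
    simp only [sum_add_distrib, sum_const, Finset.card_fin, smul_eq_mul, add_tsub_cancel_right]
    rw [show (m + 1) * (r + 1) - 1 = m + (m + 1) * r by rw [mul_add_one]; omega]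
    ring
  have hprod : ∀ x : Fin (m + 1) → ℝ,
      (∏ s, x s ^ e s) * (((m + 1) * r - 1)! / ((r - 1)! : ℝ) ^ (m + 1) * ∏ s, x s ^ (r - 1))
        = ((m + 1) * r - 1)! / ((r - 1)! : ℝ) ^ (m + 1) * ∏ s, x s ^ (r - 1 + e s) := by
    intro x
    simp only [pow_add, prod_mul_distrib]
    ring
  simp only [nuIntegral, simplexIntegral_succ, hprod]
  rw [integral_const_mul, integral_solidSimplex_prod_simplexChart_pow, hdeg, mul_div_assoc]

lemma nuIntegral_one {m r : ℕ} (hr : 0 < r) : nuIntegral (m + 1) r (fun _ => 1) = 1 := by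
  have := nuIntegral_prod_pow (m := m) hr 0
  simp only [Pi.zero_apply, pow_zero, prod_const_one, add_zero, sum_const_zero, prod_const,
    Finset.card_fin] at this
  rw [this]
  field_simp

lemma nuIntegral_apply {m r : ℕ} (hr : 0 < r) (s : Fin (m + 1)) :
    nuIntegral (m + 1) r (fun x => x s) = 1 / (m + 1) := by
  classical
  have hfac : ∀ t, ((r - 1 + if t = s then 1 else 0)! : ℝ)
      = (r - 1)! * if t = s then (r : ℝ) else 1 := by
    intro t
    split_ifs
    · rw [Nat.sub_add_cancel hr, ← Nat.mul_factorial_pred hr.ne']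
      push_cast
      ring
    · simp
  have hK : ((m + 1) * r - 1 + 1)! = ((m + 1) * r : ℝ) * ((m + 1) * r - 1)! := by
    have hpos : (m + 1) * r ≠ 0 := by positivity
    rw [Nat.sub_add_cancel (Nat.one_le_iff_ne_zero.2 hpos), ← Nat.mul_factorial_pred hpos]
    push_cast
    ring
  have := nuIntegral_prod_pow (m := m) hr (Pi.single s 1)
  simp only [Pi.single_apply, pow_ite, pow_one, pow_zero, Fintype.prod_ite_eq'] at this
  rw [this, prod_congr rfl fun t _ => hfac t, prod_mul_distrib, prod_const, Finset.card_fin,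
    Fintype.prod_ite_eq', Fintype.sum_ite_eq', hK]
  field_simp

lemma nuIntegral_sum_div {m r : ℕ} (hr : 0 < r) :
    nuIntegral (m + 1) r (fun x => ∑ s, x s / ((s : ℕ) + 1))
      = (∑ s ∈ range (m + 1), (1 : ℝ) / (s + 1)) / (m + 1) := by
  have hint : ∀ s : Fin (m + 1), IntegrableOn (fun y : Fin m → ℝ =>
      simplexChart (m + 1) y s / ((s : ℕ) + 1) *
        (((m + 1) * r - 1)! / ((r - 1)! : ℝ) ^ (m + 1) * ∏ t, simplexChart (m + 1) y t ^ (r - 1)))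
      (solidSimplex m) := fun s =>
    integrableOn_solidSimplex (by have := continuous_simplexChart (m + 1); fun_prop)
  simp only [nuIntegral, simplexIntegral_succ, sum_mul]
  rw [integral_finsetSum _ fun s _ => hint s, ← Fin.sum_univ_eq_sum_range, sum_div]
  refine sum_congr rfl fun s _ => ?_
  have hs := nuIntegral_apply (m := m) hr s
  simp only [nuIntegral, simplexIntegral_succ] at hs
  rw [div_right_comm, ← hs, ← integral_div]
  congr 1 with y
  ring

theorem pow_nuIntegral_le_nuIntegral_pow {m r : ℕ} (hr : 0 < r) {F : (Fin (m + 1) → ℝ) → ℝ}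
    (hF : Continuous F) (hF0 : ∀ x ∈ stdSimplex ℝ (Fin (m + 1)), 0 ≤ F x) (n : ℕ) :
    nuIntegral (m + 1) r F ^ n ≤ nuIntegral (m + 1) r (fun x => F x ^ n) := by
  set w : (Fin m → ℝ) → ℝ := fun y =>
    ((m + 1) * r - 1)! / ((r - 1)! : ℝ) ^ (m + 1) * ∏ s, simplexChart (m + 1) y s ^ (r - 1)
  have hwc : Continuous w := by
    have := continuous_simplexChart (m + 1)
    fun_prop
  have hFc : Continuous fun y : Fin m → ℝ => F (simplexChart (m + 1) y) :=
    hF.comp (continuous_simplexChart _)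
  have hw1 : ∫ y in solidSimplex m, w y = 1 := by
    simpa [nuIntegral, simplexIntegral_succ] using nuIntegral_one (m := m) hr
  exact pow_integral_mul_le_integral_pow_mul n
    (ae_restrict_of_forall_mem (measurableSet_solidSimplex m) fun y hy => mul_nonneg
      (by positivity) (prod_nonneg fun s _ => pow_nonneg ((simplexChart_mem_stdSimplex hy).1 s) _))
    (ae_restrict_of_forall_mem (measurableSet_solidSimplex m) fun y hy =>
      hF0 _ (simplexChart_mem_stdSimplex hy))
    hw1 (integrableOn_solidSimplex hwc) (integrableOn_solidSimplex (hFc.mul hwc))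
    (integrableOn_solidSimplex ((hFc.pow n).mul hwc))

theorem stmt9_general (k r n : ℕ) (hk : 0 < k) (hr : 0 < r) :
    (r : ℝ) ^ n * (∑ s ∈ Finset.range k, (1 : ℝ) / (s + 1)) ^ n /
        (∏ i ∈ Finset.range n, ((k * r : ℕ) + i : ℝ)) ≤
      nuIntegral k r (fun x => (∑ s, x s / ((s : ℕ) + 1)) ^ n) := by
  obtain ⟨m, rfl⟩ := Nat.exists_eq_add_one_of_ne_zero hk.ne'
  set H := ∑ s ∈ range (m + 1), (1 : ℝ) / (s + 1)
  have hjensen := pow_nuIntegral_le_nuIntegral_pow hr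
    (F := fun x : Fin (m + 1) → ℝ => ∑ s, x s / ((s : ℕ) + 1)) (by fun_prop)
    (fun x hx => sum_nonneg fun s _ => div_nonneg (hx.1 s) (by positivity)) n
  rw [nuIntegral_sum_div hr] at hjensen
  refine le_trans ?_ hjensen
  have hK : (0 : ℝ) < (m + 1) * r := by positivity
  calc (r : ℝ) ^ n * H ^ n / ∏ i ∈ range n, (((m + 1) * r : ℕ) + i : ℝ)
      ≤ r ^ n * H ^ n / ((m + 1) * r) ^ n := by
        gcongr
        exact_mod_cast pow_le_prod_range_add hK.le n
    _ = (H / (m + 1)) ^ n := by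
        rw [mul_pow, div_pow]
        field_simp

theorem stmt9 (k r n : ℕ) (hk : 0 < k) (hr : 0 < r) (hn : 0 < n) :
    (r : ℝ) ^ n * (∑ s ∈ Finset.range k, (1 : ℝ) / (s + 1)) ^ n /
        (∏ i ∈ Finset.range n, ((k * r : ℕ) + i : ℝ)) ≤
      nuIntegral k r (fun x => (∑ s, x s / ((s : ℕ) + 1)) ^ n) :=
  stmt9_general k r n hk hr
end

section
/- For positive integers k, n, Σ_{1≤s_1,...,s_n≤k} (β_1!···β_k!)/(s_1···s_n) ≤ (1/3) Σ_{m=2}^n (2^m n!/(n−m)!) H_k^{n−m} + H_k^n, where H_k = 1 + 1/2 + ... + 1/k and β_i = #{j : s_j = i}. -/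
open Finset

namespace Stmt15

variable (k : ℕ)

noncomputable def x (v : Fin k) : ℝ := 1 / ((v : ℕ) + 1)

def bet {n : ℕ} (s : Fin n → Fin k) (i : Fin k) : ℕ :=
  (Finset.univ.filter (fun j => s j = i)).card

noncomputable def w {n : ℕ} (s : Fin n → Fin k) : ℝ :=
  (∏ i, (Nat.factorial (bet k s i) : ℝ)) * ∏ j, x k (s j)

noncomputable def A (n : ℕ) : ℝ := ∑ s : Fin n → Fin k, w k s

noncomputable def Cc (n : ℕ) (v : Fin k) : ℝ := ∑ s : Fin n → Fin k, (bet k s v : ℝ) * w k s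

lemma x_pos (v : Fin k) : 0 < x k v := by
  unfold x; positivity

lemma x_le_one (v : Fin k) : x k v ≤ 1 := by
  unfold x
  rw [div_le_one (by positivity)]
  simp

lemma w_nonneg {n : ℕ} (s : Fin n → Fin k) : 0 ≤ w k s := by
  unfold w
  apply mul_nonneg
  · exact Finset.prod_nonneg fun i _ => by positivity
  · exact Finset.prod_nonneg fun j _ => (x_pos k _).le

lemma A_nonneg (n : ℕ) : 0 ≤ A k n :=
  Finset.sum_nonneg fun s _ => w_nonneg k s

lemma bet_eq_sum {n : ℕ} (s : Fin n → Fin k) (i : Fin k) :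
    bet k s i = ∑ j, if s j = i then 1 else 0 := by
  rw [bet, Finset.card_filter]

lemma bet_cons {n : ℕ} (s : Fin n → Fin k) (v i : Fin k) :
    bet k (Fin.cons v s) i = (if v = i then 1 else 0) + bet k s i := by
  rw [bet_eq_sum, bet_eq_sum, Fin.sum_univ_succ]
  simp

lemma w_cons {n : ℕ} (s : Fin n → Fin k) (v : Fin k) :
    w k (Fin.cons v s) = x k v * ((bet k s v : ℝ) + 1) * w k s := by
  unfold w
  rw [Fin.prod_univ_succ]
  simp only [Fin.cons_zero, Fin.cons_succ]
  have h1 : (∏ i, (Nat.factorial (bet k (Fin.cons v s) i) : ℝ)) =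
      ((bet k s v : ℝ) + 1) * ∏ i, (Nat.factorial (bet k s i) : ℝ) := by
    rw [← Finset.mul_prod_erase Finset.univ _ (Finset.mem_univ v),
        ← Finset.mul_prod_erase Finset.univ (fun i => (Nat.factorial (bet k s i) : ℝ))
          (Finset.mem_univ v)]
    rw [Finset.prod_congr rfl fun i hi => by
      rw [bet_cons, if_neg fun h => (Finset.ne_of_mem_erase hi) h.symm, Nat.zero_add]]
    rw [bet_cons, if_pos rfl]
    have : (1 + bet k s v).factorial = (bet k s v + 1) * (bet k s v).factorial := by
      rw [Nat.add_comm, Nat.factorial_succ]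
    rw [this]
    push_cast
    ring
  rw [h1]; ring


lemma sum_succ_eq {n : ℕ} (f : (Fin (n + 1) → Fin k) → ℝ) :
    ∑ s : Fin (n + 1) → Fin k, f s = ∑ v : Fin k, ∑ s : Fin n → Fin k, f (Fin.cons v s) := by
  have := Fintype.sum_equiv (Fin.consEquiv fun _ => Fin k)
    (fun p : Fin k × (Fin n → Fin k) => f (Fin.cons p.1 p.2)) f (fun p => rfl)
  rw [← this, Fintype.sum_prod_type]

lemma A_succ_aux (n : ℕ) :
    A k (n + 1) = ∑ v : Fin k, x k v * (A k n + Cc k n v) := by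
  rw [A, sum_succ_eq]
  refine Finset.sum_congr rfl fun v _ => ?_
  rw [Finset.sum_congr rfl fun s _ => w_cons k s v]
  rw [A, Cc, mul_add, Finset.mul_sum, Finset.mul_sum, ← Finset.sum_add_distrib]
  refine Finset.sum_congr rfl fun s _ => ?_
  ring

lemma w_comp_perm {n : ℕ} (s : Fin n → Fin k) (σ : Equiv.Perm (Fin n)) :
    w k (s ∘ σ) = w k s := by
  unfold w
  congr 1
  · refine Finset.prod_congr rfl fun i _ => ?_
    congr 2
    rw [bet_eq_sum, bet_eq_sum]
    exact Equiv.sum_comp σ (fun j => if s j = i then (1:ℕ) else 0)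
  · exact Equiv.prod_comp σ (fun j => x k (s j))

lemma Cc_succ (n : ℕ) (v : Fin k) :
    Cc k (n + 1) v = (n + 1) * (x k v * (A k n + Cc k n v)) := by
  have key : ∀ j : Fin (n + 1),
      (∑ s : Fin (n + 1) → Fin k, (if s j = v then (1:ℝ) else 0) * w k s)
      = x k v * (A k n + Cc k n v) := by
    intro j
    have hswap : (∑ s : Fin (n + 1) → Fin k, (if s j = v then (1:ℝ) else 0) * w k s)
        = ∑ s : Fin (n + 1) → Fin k, (if s 0 = v then (1:ℝ) else 0) * w k s := by
      refine Fintype.sum_equiv ((Equiv.swap (0 : Fin (n+1)) j).arrowCongr (Equiv.refl (Fin k)))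
        _ _ fun s => ?_
      have he : ((Equiv.swap (0 : Fin (n+1)) j).arrowCongr (Equiv.refl (Fin k))) s
          = s ∘ (Equiv.swap (0 : Fin (n+1)) j) := by
        ext t
        simp [Equiv.arrowCongr, Equiv.symm_apply_eq]
      rw [he, w_comp_perm]
      have h2 : (s ∘ ⇑(Equiv.swap (0 : Fin (n+1)) j)) 0 = s j := by
        simp [Equiv.swap_apply_left]
      rw [h2]
    rw [hswap, sum_succ_eq]
    rw [Finset.sum_congr rfl fun u _ => Finset.sum_congr rfl fun s _ => by
      rw [Fin.cons_zero, w_cons]]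
    rw [Fintype.sum_eq_single v ?h]
    · rw [if_pos rfl]
      rw [A, Cc, mul_add, Finset.mul_sum, Finset.mul_sum, ← Finset.sum_add_distrib]
      refine Finset.sum_congr rfl fun s _ => ?_
      ring
    case h =>
      intro u hu
      simp [if_neg hu]
  calc Cc k (n + 1) v
      = ∑ s : Fin (n + 1) → Fin k, ∑ j, (if s j = v then (1:ℝ) else 0) * w k s := by
        refine Finset.sum_congr rfl fun s _ => ?_
        rw [← Finset.sum_mul, bet_eq_sum]
        push_cast
        rfl
    _ = ∑ j, ∑ s : Fin (n + 1) → Fin k, (if s j = v then (1:ℝ) else 0) * w k s :=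
        Finset.sum_comm
    _ = ∑ j : Fin (n + 1), x k v * (A k n + Cc k n v) :=
        Finset.sum_congr rfl fun j _ => key j
    _ = (n + 1) * (x k v * (A k n + Cc k n v)) := by
        rw [Finset.sum_const, Finset.card_univ, Fintype.card_fin, nsmul_eq_mul]
        push_cast; ring


noncomputable def r (n m : ℕ) : ℝ := (n.factorial : ℝ) / ((n - m).factorial : ℝ)

lemma r_nonneg (n m : ℕ) : 0 ≤ r n m := by
  unfold r; positivity

lemma r_succ_succ {n m : ℕ} (h : m ≤ n) : r (n + 1) (m + 1) = (n + 1) * r n m := by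
  rw [r, r, Nat.succ_sub_succ, Nat.factorial_succ]
  push_cast; ring

lemma r_one (n : ℕ) : r (n + 1) 1 = (n + 1 : ℝ) := by
  rw [r, Nat.succ_sub_one, Nat.factorial_succ]
  push_cast
  rw [mul_div_assoc, div_self (by exact_mod_cast n.factorial_ne_zero), mul_one]

noncomputable def p (t : ℕ) : ℝ := ∑ v : Fin k, x k v ^ t

lemma Cc_eq : ∀ (n : ℕ) (v : Fin k),
    Cc k n v = ∑ m ∈ Finset.Icc 1 n, x k v ^ m * r n m * A k (n - m) := by
  intro n
  induction n with
  | zero =>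
    intro v
    have : ∀ s : Fin 0 → Fin k, bet k s v = 0 := by
      intro s; rw [bet_eq_sum]; simp
    simp [Cc, this]
  | succ n IH =>
    intro v
    rw [Cc_succ, IH]
    have hins : Finset.Icc 1 (n + 1) = insert 1 (Finset.Icc 2 (n + 1)) := by
      ext a; simp; omega
    rw [hins, Finset.sum_insert (by simp)]
    have hmap : Finset.Icc 2 (n + 1) = (Finset.Icc 1 n).map (addRightEmbedding 1) := by
      rw [Finset.map_add_right_Icc]
    rw [hmap, Finset.sum_map]
    simp only [addRightEmbedding_apply]
    have hterm : ∀ m ∈ Finset.Icc 1 n,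
        x k v ^ (m + 1) * r (n + 1) (m + 1) * A k (n + 1 - (m + 1))
        = (n + 1 : ℝ) * (x k v * (x k v ^ m * r n m * A k (n - m))) := by
      intro m hm
      rw [Nat.add_sub_add_right, r_succ_succ (Finset.mem_Icc.mp hm).2, pow_succ]
      ring
    rw [Finset.sum_congr rfl hterm, pow_one, r_one, Nat.add_sub_cancel,
      ← Finset.mul_sum, ← Finset.mul_sum]
    ring

lemma A_succ (n : ℕ) :
    A k (n + 1) = p k 1 * A k n +
      ∑ m ∈ Finset.Icc 1 n, p k (m + 1) * r n m * A k (n - m) := by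
  rw [A_succ_aux]
  rw [Finset.sum_congr rfl (fun v _ => by rw [Cc_eq, mul_add, Finset.mul_sum])]
  rw [Finset.sum_add_distrib]
  congr 1
  · rw [p, Finset.sum_mul]
    exact Finset.sum_congr rfl fun v _ => by rw [pow_one]
  · rw [Finset.sum_comm]
    refine Finset.sum_congr rfl fun m _ => ?_
    rw [p, Finset.sum_mul, Finset.sum_mul]
    refine Finset.sum_congr rfl fun v _ => ?_
    rw [pow_succ]
    ring

lemma harmonic_sq : ∀ K : ℕ, 1 ≤ K →
    ∑ i ∈ Finset.range K, (1 / ((i : ℝ) + 1)) ^ 2 ≤ 2 - 1 / (K : ℝ) := by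
  intro K hK
  induction K, hK using Nat.le_induction with
  | base => norm_num
  | succ K hK IH =>
    rw [Finset.sum_range_succ]
    have hK0 : (0 : ℝ) < K := by exact_mod_cast hK
    have h1 : (1 / ((K : ℝ) + 1)) ^ 2 ≤ 1 / (K : ℝ) - 1 / ((K : ℝ) + 1) := by
      rw [div_sub_div _ _ (ne_of_gt hK0) (by positivity), div_pow, one_pow,
        div_le_div_iff₀ (by positivity) (by positivity)]
      ring_nf
      nlinarith
    push_cast
    linarith

lemma sum_sq_le : ∑ v : Fin k, x k v ^ 2 ≤ 2 := by
  have key : ∀ K : ℕ, ∑ i ∈ Finset.range K, (1 / ((i : ℝ) + 1)) ^ 2 ≤ 2 := by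
    intro K
    rcases Nat.eq_zero_or_pos K with h0 | h1
    · subst h0; simp
    · have h := harmonic_sq K h1
      have h2 : (0 : ℝ) ≤ 1 / (K : ℝ) := by positivity
      linarith
  rw [show (∑ v : Fin k, x k v ^ 2) = ∑ i ∈ Finset.range k, (1 / ((i : ℝ) + 1)) ^ 2 from
    Fin.sum_univ_eq_sum_range (fun i => (1 / ((i : ℝ) + 1)) ^ 2) k]
  exact key k

lemma p_le_two {m : ℕ} (hm : 2 ≤ m) : p k m ≤ 2 := by
  refine le_trans ?_ (sum_sq_le k)
  apply Finset.sum_le_sum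
  intro v _
  exact pow_le_pow_of_le_one (x_pos k v).le (x_le_one k v) hm

lemma p_nonneg (t : ℕ) : 0 ≤ p k t :=
  Finset.sum_nonneg fun v _ => pow_nonneg (x_pos k v).le t


lemma r_mul {n m j : ℕ} (h : m + j ≤ n) : r n m * r (n - m) j = r n (m + j) := by
  unfold r
  rw [show n - m - j = n - (m + j) from by omega]
  have h1 : (((n - m).factorial : ℝ)) ≠ 0 := by exact_mod_cast (n - m).factorial_ne_zero
  have h2 : (((n - (m + j)).factorial : ℝ)) ≠ 0 := by
    exact_mod_cast (n - (m + j)).factorial_ne_zero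
  field_simp

lemma r_rec {n t : ℕ} (h1 : 1 ≤ t) (h2 : t ≤ n) :
    r (n + 1) t = t * r n (t - 1) + r n t := by
  unfold r
  rw [show n + 1 - t = (n - t) + 1 from by omega, show n - (t - 1) = (n - t) + 1 from by omega,
    Nat.factorial_succ (n - t), Nat.factorial_succ n]
  have h3 : (((n - t).factorial : ℝ)) ≠ 0 := by exact_mod_cast (n - t).factorial_ne_zero
  have h6 : (((n - t : ℕ) : ℝ)) + 1 ≠ 0 := by positivity
  push_cast [Nat.cast_sub h2]
  have h7 : (n : ℝ) - t + 1 ≠ 0 := by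
    have : (t : ℝ) ≤ n := by exact_mod_cast h2
    intro hc; linarith
  field_simp
  ring

lemma r_top (n : ℕ) : r (n + 1) (n + 1) = (n + 1 : ℝ) * r n n := by
  unfold r
  rw [Nat.sub_self, Nat.sub_self, Nat.factorial_succ]
  push_cast
  ring

lemma reindex (n : ℕ) (g : ℕ → ℕ → ℝ) :
    ∑ m ∈ Finset.Icc 1 n, ∑ j ∈ Finset.Icc 2 (n - m), g j (m + j)
      = ∑ i ∈ Finset.Icc 1 n, ∑ j ∈ Finset.Icc 2 (i - 1), g j i := by
  rw [Finset.sum_sigma', Finset.sum_sigma']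
  refine Finset.sum_nbij' (fun p => ⟨p.1 + p.2, p.2⟩) (fun p => ⟨p.1 - p.2, p.2⟩)
    ?_ ?_ ?_ ?_ ?_
  · intro a ha
    simp only [Finset.mem_sigma, Finset.mem_Icc] at ha ⊢
    omega
  · intro a ha
    simp only [Finset.mem_sigma, Finset.mem_Icc] at ha ⊢
    omega
  · intro a ha
    simp only [Finset.mem_sigma, Finset.mem_Icc] at ha
    ext <;> simp <;> omega
  · intro a ha
    simp only [Finset.mem_sigma, Finset.mem_Icc] at ha
    ext <;> simp <;> omega
  · intro a ha
    simp only [Finset.mem_sigma, Finset.mem_Icc] at ha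
    rfl

noncomputable def G (n : ℕ) : ℝ :=
  (1 / 3) * (∑ m ∈ Finset.Icc 2 n, 2 ^ m * r n m * (p k 1) ^ (n - m)) + (p k 1) ^ n

lemma G_nonneg (n : ℕ) : 0 ≤ G k n := by
  have h0 := p_nonneg k 1
  unfold G
  have : ∀ m ∈ Finset.Icc 2 n, (0:ℝ) ≤ 2 ^ m * r n m * (p k 1) ^ (n - m) := by
    intro m _
    have := r_nonneg n m
    positivity
  have hs := Finset.sum_nonneg this
  positivity


lemma coeff_bound (i : ℕ) (hi : 1 ≤ i) :
    2 + (2 / 3) * (∑ j ∈ Finset.Icc 2 (i - 1), (2:ℝ) ^ j)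
      ≤ (1 / 3) * (2 ^ (i + 1) * (i + 1)) := by
  rcases Nat.lt_or_ge i 2 with h2 | h2
  · have : i = 1 := by omega
    subst this
    norm_num
  · have hsub : Finset.Icc 2 (i - 1) ⊆ Finset.range i := by
      intro j hj
      simp only [Finset.mem_Icc] at hj
      simp only [Finset.mem_range]
      omega
    have hs : (∑ j ∈ Finset.Icc 2 (i - 1), (2:ℝ) ^ j) ≤ ∑ j ∈ Finset.range i, (2:ℝ) ^ j :=
      Finset.sum_le_sum_of_subset_of_nonneg hsub (fun j _ _ => by positivity)
    have hgeom : (∑ j ∈ Finset.range i, (2:ℝ) ^ j) = 2 ^ i - 1 := by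
      rw [geom_sum_eq (by norm_num)]
      norm_num
    have h4 : (4:ℝ) ≤ 2 ^ i := by
      calc (4:ℝ) = 2 ^ 2 := by norm_num
        _ ≤ 2 ^ i := by exact pow_le_pow_right₀ (by norm_num) h2
    have hi2 : (2:ℝ) ≤ i := by exact_mod_cast h2
    have h8 : (8:ℝ) ≤ (i:ℝ) * 2 ^ i := by nlinarith
    rw [hgeom] at hs
    rw [pow_succ]
    nlinarith [hs, h8, h4]

lemma stepA (n : ℕ) :
    ∑ m ∈ Finset.Icc 1 n, 2 * r n m * G k (n - m)
      ≤ (1 / 3) * ∑ i ∈ Finset.Icc 1 n, 2 ^ (i + 1) * (i + 1) * (r n i * (p k 1) ^ (n - i)) := by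
  have hexp : ∀ m ∈ Finset.Icc 1 n, 2 * r n m * G k (n - m)
      = 2 * (r n m * (p k 1) ^ (n - m))
        + ∑ j ∈ Finset.Icc 2 (n - m), (2 / 3) * 2 ^ j * (r n (m + j) * (p k 1) ^ (n - (m + j))) := by
    intro m hm
    rw [Finset.mem_Icc] at hm
    rw [G, mul_add, ← mul_assoc, Finset.mul_sum, add_comm]
    congr 1
    · ring
    · refine Finset.sum_congr rfl fun j hj => ?_
      rw [Finset.mem_Icc] at hj
      have hmj : m + j ≤ n := by omega
      rw [show n - m - j = n - (m + j) from by omega, ← r_mul hmj]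
      ring
  rw [Finset.sum_congr rfl hexp, Finset.sum_add_distrib,
    reindex n (fun j i => (2 / 3) * 2 ^ j * (r n i * (p k 1) ^ (n - i)))]
  rw [Finset.mul_sum, ← Finset.sum_add_distrib]
  apply Finset.sum_le_sum
  intro i hi
  rw [Finset.mem_Icc] at hi
  have hu : (0:ℝ) ≤ r n i * (p k 1) ^ (n - i) := by
    have := r_nonneg n i
    have := p_nonneg k 1
    positivity
  have hco := coeff_bound i hi.1
  calc 2 * (r n i * (p k 1) ^ (n - i))
        + ∑ j ∈ Finset.Icc 2 (i - 1), (2 / 3) * 2 ^ j * (r n i * (p k 1) ^ (n - i))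
      = (2 + (2 / 3) * (∑ j ∈ Finset.Icc 2 (i - 1), (2:ℝ) ^ j)) * (r n i * (p k 1) ^ (n - i)) := by
        rw [add_mul, mul_assoc, Finset.sum_mul, Finset.mul_sum]
        congr 1
        exact Finset.sum_congr rfl fun j _ => by ring
    _ ≤ ((1 / 3) * (2 ^ (i + 1) * (i + 1))) * (r n i * (p k 1) ^ (n - i)) :=
        mul_le_mul_of_nonneg_right hco hu
    _ = (1 / 3) * (2 ^ (i + 1) * (i + 1) * (r n i * (p k 1) ^ (n - i))) := by ring

lemma stepB (n : ℕ) :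
    G k (n + 1) = p k 1 * G k n
      + (1 / 3) * ∑ i ∈ Finset.Icc 1 n, 2 ^ (i + 1) * (i + 1) * (r n i * (p k 1) ^ (n - i)) := by
  have hHG : p k 1 * G k n
      = (1 / 3) * (∑ t ∈ Finset.Icc 2 n, 2 ^ t * r n t * (p k 1) ^ (n + 1 - t))
        + (p k 1) ^ (n + 1) := by
    rw [G, mul_add, ← pow_succ']
    congr 1
    rw [← mul_assoc, mul_comm (p k 1) (1/3:ℝ), mul_assoc, Finset.mul_sum]
    congr 1
    refine Finset.sum_congr rfl fun t ht => ?_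
    rw [Finset.mem_Icc] at ht
    rw [show n + 1 - t = (n - t) + 1 from by omega, pow_succ]
    ring
  have hshift : (∑ i ∈ Finset.Icc 1 n, 2 ^ (i + 1) * ((i:ℝ) + 1) * (r n i * (p k 1) ^ (n - i)))
      = ∑ t ∈ Finset.Icc 2 (n + 1), 2 ^ t * (t:ℝ) * (r n (t - 1) * (p k 1) ^ (n + 1 - t)) := by
    rw [show Finset.Icc 2 (n + 1) = (Finset.Icc 1 n).map (addRightEmbedding 1) from
      (Finset.map_add_right_Icc 1 n 1).symm, Finset.sum_map]
    refine Finset.sum_congr rfl fun i hi => ?_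
    rw [Finset.mem_Icc] at hi
    simp only [addRightEmbedding_apply]
    rw [Nat.add_sub_cancel, show n + 1 - (i + 1) = n - i from by omega]
    push_cast
    ring
  have hmain : (∑ t ∈ Finset.Icc 2 (n + 1), 2 ^ t * r (n + 1) t * (p k 1) ^ (n + 1 - t))
      = (∑ t ∈ Finset.Icc 2 n, 2 ^ t * r n t * (p k 1) ^ (n + 1 - t))
        + ∑ t ∈ Finset.Icc 2 (n + 1), 2 ^ t * (t:ℝ) * (r n (t - 1) * (p k 1) ^ (n + 1 - t)) := by
    have hterm : ∀ t ∈ Finset.Icc 2 (n + 1),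
        2 ^ t * r (n + 1) t * (p k 1) ^ (n + 1 - t)
        = (if t ≤ n then 2 ^ t * r n t * (p k 1) ^ (n + 1 - t) else 0)
          + 2 ^ t * (t:ℝ) * (r n (t - 1) * (p k 1) ^ (n + 1 - t)) := by
      intro t ht
      rw [Finset.mem_Icc] at ht
      rcases le_or_gt t n with h | h
      · rw [if_pos h, r_rec (by omega) h]
        ring
      · have ht1 : t = n + 1 := by omega
        subst ht1
        rw [if_neg (by omega), r_top, Nat.add_sub_cancel]
        push_cast
        ring
    rw [Finset.sum_congr rfl hterm, Finset.sum_add_distrib]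
    congr 1
    rw [← Finset.sum_subset (Finset.Icc_subset_Icc_right (by omega) :
        Finset.Icc 2 n ⊆ Finset.Icc 2 (n + 1))]
    · refine Finset.sum_congr rfl fun t ht => ?_
      rw [Finset.mem_Icc] at ht
      rw [if_pos ht.2]
    · intro t ht hnt
      rw [Finset.mem_Icc] at ht
      rw [Finset.mem_Icc] at hnt
      rw [if_neg (by omega)]
  rw [hHG, G, hshift, hmain]
  push_cast
  ring

lemma key (n : ℕ) :
    p k 1 * G k n + (∑ m ∈ Finset.Icc 1 n, 2 * r n m * G k (n - m)) ≤ G k (n + 1) := by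
  rw [stepB]
  have := stepA k n
  linarith

lemma A_zero : A k 0 = 1 := by
  rw [A, Fintype.sum_subsingleton _ (fun j : Fin 0 => j.elim0)]
  rw [w]
  have hb : ∀ i : Fin k, bet k (fun j : Fin 0 => j.elim0) i = 0 := by
    intro i
    rw [bet_eq_sum]
    simp
  simp [hb]

lemma G_zero : G k 0 = 1 := by
  rw [G]
  simp

lemma A_le_G : ∀ n : ℕ, A k n ≤ G k n := by
  intro n
  induction n using Nat.strong_induction_on with
  | _ n IH =>
    cases n with
    | zero => rw [A_zero, G_zero]
    | succ n =>
      rw [A_succ]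
      have hstep : ∑ m ∈ Finset.Icc 1 n, p k (m + 1) * r n m * A k (n - m)
          ≤ ∑ m ∈ Finset.Icc 1 n, 2 * r n m * G k (n - m) := by
        apply Finset.sum_le_sum
        intro m hm
        have hA := IH (n - m) (by omega)
        have hAn := A_nonneg k (n - m)
        have hp := p_le_two k (show 2 ≤ m + 1 by rw [Finset.mem_Icc] at hm; omega)
        have hp0 := p_nonneg k (m + 1)
        have hr := r_nonneg n m
        rw [mul_assoc, mul_assoc]
        exact (mul_le_mul_of_nonneg_right hp (mul_nonneg hr hAn)).trans
          (mul_le_mul_of_nonneg_left (mul_le_mul_of_nonneg_left hA hr) (by norm_num))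
      have hH := p_nonneg k 1
      have h1 : p k 1 * A k n ≤ p k 1 * G k n :=
        mul_le_mul_of_nonneg_left (IH n (by omega)) hH
      calc p k 1 * A k n + ∑ m ∈ Finset.Icc 1 n, p k (m + 1) * r n m * A k (n - m)
          ≤ p k 1 * G k n + ∑ m ∈ Finset.Icc 1 n, 2 * r n m * G k (n - m) := by linarith
        _ ≤ G k (n + 1) := key k n

end Stmt15

theorem stmt15 (k n : ℕ) (hk : 0 < k) (hn : 0 < n) :
    (∑ s : Fin n → Fin k,
        (∏ i : Fin k,
          (Nat.factorial ((Finset.univ.filter (fun j => s j = i)).card) : ℝ)) /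
          ∏ j, ((s j : ℕ) + 1 : ℝ)) ≤
      (1 / 3) * (∑ m ∈ Finset.Icc 2 n,
          (2 : ℝ) ^ m * (Nat.factorial n : ℝ) / (Nat.factorial (n - m) : ℝ) *
            (∑ s ∈ Finset.range k, (1 : ℝ) / (s + 1)) ^ (n - m)) +
        (∑ s ∈ Finset.range k, (1 : ℝ) / (s + 1)) ^ n := by
  have hH : (∑ s ∈ Finset.range k, (1 : ℝ) / (s + 1)) = Stmt15.p k 1 := by
    rw [Stmt15.p]
    rw [← Fin.sum_univ_eq_sum_range (fun i => (1 : ℝ) / ((i:ℝ) + 1)) k]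
    exact Finset.sum_congr rfl fun v _ => by rw [pow_one, Stmt15.x]
  have hLHS : (∑ s : Fin n → Fin k,
      (∏ i : Fin k,
        (Nat.factorial ((Finset.univ.filter (fun j => s j = i)).card) : ℝ)) /
        ∏ j, ((s j : ℕ) + 1 : ℝ)) = Stmt15.A k n := by
    rw [Stmt15.A]
    refine Finset.sum_congr rfl fun s _ => ?_
    rw [Stmt15.w]
    rw [show (∏ j, Stmt15.x k (s j)) = (∏ j, ((s j : ℕ) + 1 : ℝ))⁻¹ by
      rw [← Finset.prod_inv_distrib]
      exact Finset.prod_congr rfl fun j _ => by rw [Stmt15.x, one_div]]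
    rw [div_eq_mul_inv]
    rfl
  have hRHS : (1 / 3) * (∑ m ∈ Finset.Icc 2 n,
        (2 : ℝ) ^ m * (Nat.factorial n : ℝ) / (Nat.factorial (n - m) : ℝ) *
          (∑ s ∈ Finset.range k, (1 : ℝ) / (s + 1)) ^ (n - m)) +
      (∑ s ∈ Finset.range k, (1 : ℝ) / (s + 1)) ^ n = Stmt15.G k n := by
    rw [Stmt15.G, hH]
    congr 1
    congr 1
    refine Finset.sum_congr rfl fun m _ => ?_
    rw [Stmt15.r]
    ring
  rw [hLHS, hRHS]
  exact Stmt15.A_le_G k n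
end
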